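/- arXiv:1403.1527 — 11 statements merged into one kernel-verified Lean document; each statement's English description precedes it below -/
import Mathlib

section
/- Fix n ≥ 1 and extend each operator π_i (1 ≤ i ≤ n−1) linearly to the complex vector space with basis the set of all standard reverse composition tableaux of size n (interpreting the value 0 as the zero vector). These operators satisfy the defining relations of the 0-Hecke algebra H_n(0): π_i² = π_i for all 1 ≤ i ≤ n−1; π_i π_{i+1} π_i = π_{i+1} π_i π_{i+1} for all 1 ≤ i ≤ n−2; and π_i π_j = π_j π_i whenever |i−j| ≥ 2. Consequently they define an action of H_n(0) on this space. -/
/-- Cell `(r,c)` (0-indexed: row `r` from the top, column `c` from the left) of the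
reverse composition diagram of the composition `α`. -/
def IsCell (α : List ℕ) (r c : ℕ) : Prop := r < α.length ∧ c < α.getD r 0

instance (α : List ℕ) (r c : ℕ) : Decidable (IsCell α r c) :=
  inferInstanceAs (Decidable (r < α.length ∧ c < α.getD r 0))

/-- A standard reverse composition tableau (SRCT) of shape `α`: a bijective filling of the
reverse composition diagram of `α` by `{1,…,α.sum}` (with the junk value `0` off the diagram)
whose rows decrease from left to right, whose first column increases from top to bottom,
and which satisfies the triple rule. -/
structure SRCT (α : List ℕ) where
  entry : ℕ → ℕ → ℕ
  zero_off : ∀ r c, ¬ IsCell α r c → entry r c = 0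
  one_le : ∀ r c, IsCell α r c → 1 ≤ entry r c
  le_sum : ∀ r c, IsCell α r c → entry r c ≤ α.sum
  inj : ∀ r c r' c', IsCell α r c → IsCell α r' c' → entry r c = entry r' c' → r = r' ∧ c = c'
  surj : ∀ m, 1 ≤ m → m ≤ α.sum → ∃ r c, IsCell α r c ∧ entry r c = m
  row_dec : ∀ r c, IsCell α r (c + 1) → entry r (c + 1) < entry r c
  col1_inc : ∀ r r', r < r' → IsCell α r 0 → IsCell α r' 0 → entry r 0 < entry r' 0
  triple : ∀ r r' c, r < r' → IsCell α r c → IsCell α r' (c + 1) →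
    entry r' (c + 1) < entry r c → IsCell α r (c + 1) ∧ entry r' (c + 1) < entry r (c + 1)

/-- `i` is a descent of `T`: `i+1` appears weakly right of `i`. -/
def Descent (α : List ℕ) (T : SRCT α) (i : ℕ) : Prop :=
  ∃ r c r' c', IsCell α r c ∧ IsCell α r' c' ∧
    T.entry r c = i ∧ T.entry r' c' = i + 1 ∧ c ≤ c'

/-- `i` and `i+1` are attacking in `T`: same column, or adjacent columns with `i+1`
strictly southeast of `i`. -/
def Attacking (α : List ℕ) (T : SRCT α) (i : ℕ) : Prop :=
  ∃ r c r' c', IsCell α r c ∧ IsCell α r' c' ∧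
    T.entry r c = i ∧ T.entry r' c' = i + 1 ∧ (c' = c ∨ (c' = c + 1 ∧ r < r'))

/-- The entry function of the filling `s_i(T)` obtained from `T` by interchanging the
positions of the entries `i` and `i+1`. -/
def swapEntry (α : List ℕ) (T : SRCT α) (i : ℕ) : ℕ → ℕ → ℕ := fun r c =>
  if T.entry r c = i then i + 1 else if T.entry r c = i + 1 then i else T.entry r c

/-- The compositions of `n`. -/
abbrev CompN (n : ℕ) : Type := {l : List ℕ // (∀ a ∈ l, 0 < a) ∧ l.sum = n}

/-- All standard reverse composition tableaux of size `n` (of any shape `α ⊨ n`). -/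
abbrev SRCTn (n : ℕ) : Type := Σ α : CompN n, SRCT α.1

namespace HeckeSRCTAux

open Classical in
/-- The (unique) position of the value `m` in `T`. -/
noncomputable def pos (α : List ℕ) (T : SRCT α) (m : ℕ) : ℕ × ℕ :=
  if h : ∃ p : ℕ × ℕ, IsCell α p.1 p.2 ∧ T.entry p.1 p.2 = m then h.choose else (0, 0)

lemma pos_spec (α : List ℕ) (T : SRCT α) (m : ℕ) (h1 : 1 ≤ m) (h2 : m ≤ α.sum) :
    IsCell α (pos α T m).1 (pos α T m).2 ∧ T.entry (pos α T m).1 (pos α T m).2 = m := by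
  have h : ∃ p : ℕ × ℕ, IsCell α p.1 p.2 ∧ T.entry p.1 p.2 = m := by
    obtain ⟨r, c, hc, he⟩ := T.surj m h1 h2
    exact ⟨(r, c), hc, he⟩
  rw [pos, dif_pos h]
  exact h.choose_spec

lemma pos_eq (α : List ℕ) (T : SRCT α) (m : ℕ) (p : ℕ × ℕ)
    (hc : IsCell α p.1 p.2) (he : T.entry p.1 p.2 = m) : pos α T m = p := by
  have h1 : 1 ≤ m := he ▸ T.one_le p.1 p.2 hc
  have h2 : m ≤ α.sum := he ▸ T.le_sum p.1 p.2 hc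
  obtain ⟨hc', he'⟩ := pos_spec α T m h1 h2
  obtain ⟨h3, h4⟩ := T.inj _ _ _ _ hc' hc (he'.trans he.symm)
  rw [Prod.ext_iff]
  exact ⟨h3, h4⟩

lemma descent_iff {α : List ℕ} (T : SRCT α) (i : ℕ) (h1 : 1 ≤ i) (h2 : i + 1 ≤ α.sum) :
    Descent α T i ↔ (pos α T i).2 ≤ (pos α T (i + 1)).2 := by
  constructor
  · rintro ⟨r, c, r', c', hc, hc', he, he', hle⟩
    rw [pos_eq α T i (r, c) hc he, pos_eq α T (i + 1) (r', c') hc' he']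
    exact hle
  · intro h
    obtain ⟨hc, he⟩ := pos_spec α T i h1 (by omega)
    obtain ⟨hc', he'⟩ := pos_spec α T (i + 1) (by omega) h2
    exact ⟨_, _, _, _, hc, hc', he, he', h⟩

lemma attacking_iff {α : List ℕ} (T : SRCT α) (i : ℕ) (h1 : 1 ≤ i) (h2 : i + 1 ≤ α.sum) :
    Attacking α T i ↔ ((pos α T (i + 1)).2 = (pos α T i).2 ∨
      ((pos α T (i + 1)).2 = (pos α T i).2 + 1 ∧ (pos α T i).1 < (pos α T (i + 1)).1)) := by
  constructor
  · rintro ⟨r, c, r', c', hc, hc', he, he', hor⟩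
    rw [pos_eq α T i (r, c) hc he, pos_eq α T (i + 1) (r', c') hc' he']
    exact hor
  · intro h
    obtain ⟨hc, he⟩ := pos_spec α T i h1 (by omega)
    obtain ⟨hc', he'⟩ := pos_spec α T (i + 1) (by omega) h2
    exact ⟨_, _, _, _, hc, hc', he, he', h⟩

lemma pos_swap_lo {α : List ℕ} (T T' : SRCT α) {i : ℕ} (hE : T'.entry = swapEntry α T i)
    (h1 : 1 ≤ i) (h2 : i + 1 ≤ α.sum) : pos α T' i = pos α T (i + 1) := by
  obtain ⟨hc, he⟩ := pos_spec α T (i + 1) (by omega) h2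
  refine pos_eq α T' i _ hc ?_
  rw [hE]
  simp only [swapEntry, he]
  split_ifs <;> omega

lemma pos_swap_hi {α : List ℕ} (T T' : SRCT α) {i : ℕ} (hE : T'.entry = swapEntry α T i)
    (h1 : 1 ≤ i) (h2 : i + 1 ≤ α.sum) : pos α T' (i + 1) = pos α T i := by
  obtain ⟨hc, he⟩ := pos_spec α T i h1 (by omega)
  refine pos_eq α T' (i + 1) _ hc ?_
  rw [hE]
  simp only [swapEntry, he]
  split_ifs <;> omega

lemma pos_swap_other {α : List ℕ} (T T' : SRCT α) {i : ℕ} (hE : T'.entry = swapEntry α T i)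
    (h1 : 1 ≤ i) (h2 : i + 1 ≤ α.sum) (m : ℕ) (hm1 : 1 ≤ m) (hm2 : m ≤ α.sum)
    (hne1 : m ≠ i) (hne2 : m ≠ i + 1) : pos α T' m = pos α T m := by
  obtain ⟨hc, he⟩ := pos_spec α T m hm1 hm2
  refine pos_eq α T' m _ hc ?_
  rw [hE]
  simp only [swapEntry, he]
  split_ifs <;> omega

lemma SRCT.entry_ext {α : List ℕ} {T T' : SRCT α} (h : T.entry = T'.entry) : T = T' := by
  cases T; cases T'; cases h; rfl

/-- The value relabeling swapping `i` and `i+1`. -/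
def swf (i v : ℕ) : ℕ := if v = i then i + 1 else if v = i + 1 then i else v

set_option maxHeartbeats 1000000 in
lemma swf_braid (i v : ℕ) :
    swf i (swf (i + 1) (swf i v)) = swf (i + 1) (swf i (swf (i + 1) v)) := by
  unfold swf; split_ifs <;> omega

set_option maxHeartbeats 1000000 in
lemma swf_comm (i j v : ℕ) (h : i + 2 ≤ j) : swf i (swf j v) = swf j (swf i v) := by
  unfold swf; split_ifs <;> omega

lemma entry_swf {α : List ℕ} (S S' : SRCT α) (k : ℕ) (h : S'.entry = swapEntry α S k)
    (r c : ℕ) : S'.entry r c = swf k (S.entry r c) := by rw [h]; rfl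

lemma swap_entry_braid {α : List ℕ} (T x1 x2 x3 y1 y2 y3 : SRCT α) (i : ℕ)
    (h1 : x1.entry = swapEntry α T i) (h2 : x2.entry = swapEntry α x1 (i + 1))
    (h3 : x3.entry = swapEntry α x2 i)
    (k1 : y1.entry = swapEntry α T (i + 1)) (k2 : y2.entry = swapEntry α y1 i)
    (k3 : y3.entry = swapEntry α y2 (i + 1)) : x3 = y3 := by
  apply SRCT.entry_ext
  funext r c
  rw [entry_swf x2 x3 i h3, entry_swf x1 x2 (i + 1) h2, entry_swf T x1 i h1,
    entry_swf y2 y3 (i + 1) k3, entry_swf y1 y2 i k2, entry_swf T y1 (i + 1) k1]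
  exact swf_braid i (T.entry r c)

lemma swap_entry_comm {α : List ℕ} (T x1 x2 y1 y2 : SRCT α) (i j : ℕ) (hij : i + 2 ≤ j)
    (h1 : x1.entry = swapEntry α T j) (h2 : x2.entry = swapEntry α x1 i)
    (k1 : y1.entry = swapEntry α T i) (k2 : y2.entry = swapEntry α y1 j) : x2 = y2 := by
  apply SRCT.entry_ext
  funext r c
  rw [entry_swf x1 x2 i h2, entry_swf T x1 j h1, entry_swf y1 y2 j k2, entry_swf T y1 i k1]
  exact swf_comm i j (T.entry r c) hij

lemma status_invariant {α : List ℕ} (T W : SRCT α) {i j : ℕ} (hE : W.entry = swapEntry α T j)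
    (hi : 1 ≤ i) (hj : 1 ≤ j) (hij : i + 1 < j ∨ j + 1 < i)
    (hi2 : i + 1 ≤ α.sum) (hj2 : j + 1 ≤ α.sum) :
    (Descent α W i ↔ Descent α T i) ∧ (Attacking α W i ↔ Attacking α T i) := by
  have e1 : pos α W i = pos α T i :=
    pos_swap_other T W hE hj hj2 i hi (by omega) (by omega) (by omega)
  have e2 : pos α W (i + 1) = pos α T (i + 1) :=
    pos_swap_other T W hE hj hj2 (i + 1) (by omega) hi2 (by omega) (by omega)
  rw [descent_iff W i hi hi2, descent_iff T i hi hi2,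
    attacking_iff W i hi hi2, attacking_iff T i hi hi2, e1, e2]
  exact ⟨Iff.rfl, Iff.rfl⟩

lemma end_ext {X : Type} (f g : Module.End ℂ (X →₀ ℂ))
    (h : ∀ a : X, f (Finsupp.single a 1) = g (Finsupp.single a 1)) : f = g := by
  refine Finsupp.lhom_ext fun a b => ?_
  have hb : (Finsupp.single a b : X →₀ ℂ) = b • Finsupp.single a 1 := by
    rw [Finsupp.smul_single, smul_eq_mul, mul_one]
  rw [hb, map_smul, map_smul, h]

end HeckeSRCTAux
open HeckeSRCTAux in
/-- The operators `π_i`, extended linearly to the complex vector space with basis the set of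
all SRCTs of size `n`, satisfy the defining relations of the `0`-Hecke algebra `H_n(0)`. -/
theorem pi_operators_satisfy_hecke_relations (n : ℕ) (hn : 1 ≤ n)
    (P : ℕ → Module.End ℂ (SRCTn n →₀ ℂ))
    (hP : ∀ i, 1 ≤ i → i < n → ∀ x : SRCTn n,
      (¬ Descent x.1.1 x.2 i → P i (Finsupp.single x 1) = Finsupp.single x 1) ∧
      (Descent x.1.1 x.2 i → Attacking x.1.1 x.2 i → P i (Finsupp.single x 1) = 0) ∧
      (Descent x.1.1 x.2 i → ¬ Attacking x.1.1 x.2 i →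
        ∃ T' : SRCT x.1.1, T'.entry = swapEntry x.1.1 x.2 i ∧
          P i (Finsupp.single x 1) = Finsupp.single (⟨x.1, T'⟩ : SRCTn n) 1)) :
    (∀ i, 1 ≤ i → i < n → P i * P i = P i) ∧
    (∀ i, 1 ≤ i → i + 1 < n → P i * P (i + 1) * P i = P (i + 1) * P i * P (i + 1)) ∧
    (∀ i j, 1 ≤ i → i < n → 1 ≤ j → j < n → i + 2 ≤ j → P i * P j = P j * P i) := by
  refine ⟨?_, ?_, ?_⟩
  · -- idempotence
    intro i hi1 hi2
    apply end_ext
    intro x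
    have hsum : x.1.1.sum = n := x.1.2.2
    have h1s : i + 1 ≤ x.1.1.sum := by omega
    simp only [Module.End.mul_apply]
    by_cases hD1 : Descent x.1.1 x.2 i
    · by_cases hA1 : Attacking x.1.1 x.2 i
      · rw [(hP i hi1 hi2 x).2.1 hD1 hA1, map_zero]
      · obtain ⟨V1, hV1e, hV1⟩ := (hP i hi1 hi2 x).2.2 hD1 hA1
        rw [hV1]
        replace hV1 : P i (Finsupp.single x 1) =
            Finsupp.single (⟨x.1, V1⟩ : SRCTn n) 1 := hV1
        have e1 : pos x.1.1 V1 i = pos x.1.1 x.2 (i + 1) := pos_swap_lo x.2 V1 hV1e hi1 h1s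
        have e2 : pos x.1.1 V1 (i + 1) = pos x.1.1 x.2 i := pos_swap_hi x.2 V1 hV1e hi1 h1s
        have hc1 : (pos x.1.1 x.2 i).2 ≤ (pos x.1.1 x.2 (i + 1)).2 :=
          (descent_iff x.2 i hi1 h1s).mp hD1
        have ha1 : ¬((pos x.1.1 x.2 (i + 1)).2 = (pos x.1.1 x.2 i).2 ∨
            ((pos x.1.1 x.2 (i + 1)).2 = (pos x.1.1 x.2 i).2 + 1 ∧
              (pos x.1.1 x.2 i).1 < (pos x.1.1 x.2 (i + 1)).1)) :=
          fun h => hA1 ((attacking_iff x.2 i hi1 h1s).mpr h)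
        have hnd : ¬ Descent x.1.1 V1 i := by
          rw [descent_iff V1 i hi1 h1s, e1, e2]; omega
        exact (hP i hi1 hi2 ⟨x.1, V1⟩).1 hnd
    · rw [(hP i hi1 hi2 x).1 hD1, (hP i hi1 hi2 x).1 hD1]
  · -- braid relation
    intro i hi1 hi2
    apply end_ext
    intro x
    have hsum : x.1.1.sum = n := x.1.2.2
    have hin : i < n := by omega
    have hi1' : (1 : ℕ) ≤ i + 1 := by omega
    have h1s : i + 1 ≤ x.1.1.sum := by omega
    have h2s : i + 2 ≤ x.1.1.sum := by omega
    simp only [Module.End.mul_apply]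
    by_cases hD1 : Descent x.1.1 x.2 i
    · by_cases hA1 : Attacking x.1.1 x.2 i
      · -- K case for i
        have hz := (hP i hi1 hin x).2.1 hD1 hA1
        rw [hz]
        simp only [map_zero]
        have hc1 : (pos x.1.1 x.2 i).2 ≤ (pos x.1.1 x.2 (i + 1)).2 :=
          (descent_iff x.2 i hi1 h1s).mp hD1
        have ha1 : (pos x.1.1 x.2 (i + 1)).2 = (pos x.1.1 x.2 i).2 ∨
            ((pos x.1.1 x.2 (i + 1)).2 = (pos x.1.1 x.2 i).2 + 1 ∧
              (pos x.1.1 x.2 i).1 < (pos x.1.1 x.2 (i + 1)).1) :=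
          (attacking_iff x.2 i hi1 h1s).mp hA1
        by_cases hD2 : Descent x.1.1 x.2 (i + 1)
        · by_cases hA2 : Attacking x.1.1 x.2 (i + 1)
          · rw [(hP (i + 1) hi1' hi2 x).2.1 hD2 hA2]
            simp only [map_zero]
          · obtain ⟨U1, hU1e, hU1⟩ := (hP (i + 1) hi1' hi2 x).2.2 hD2 hA2
            rw [hU1]
            have e1 : pos x.1.1 U1 i = pos x.1.1 x.2 i :=
              pos_swap_other x.2 U1 hU1e hi1' h2s i hi1 (by omega) (by omega) (by omega)
            have e2 : pos x.1.1 U1 (i + 1) = pos x.1.1 x.2 (i + 2) :=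
              pos_swap_lo x.2 U1 hU1e hi1' h2s
            have e3 : pos x.1.1 U1 (i + 2) = pos x.1.1 x.2 (i + 1) :=
              pos_swap_hi x.2 U1 hU1e hi1' h2s
            have hc2 : (pos x.1.1 x.2 (i + 1)).2 ≤ (pos x.1.1 x.2 (i + 2)).2 :=
              (descent_iff x.2 (i + 1) hi1' h2s).mp hD2
            have hD1' : Descent x.1.1 U1 i := by
              rw [descent_iff U1 i hi1 h1s, e1, e2]; omega
            by_cases hA1' : Attacking x.1.1 U1 i
            · rw [(hP i hi1 hin ⟨x.1, U1⟩).2.1 hD1' hA1']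
              simp only [map_zero]
            · obtain ⟨U2, hU2e, hU2⟩ := (hP i hi1 hin ⟨x.1, U1⟩).2.2 hD1' hA1'
              replace hU2e : U2.entry = swapEntry x.1.1 U1 i := hU2e
              replace hU2 : P i (Finsupp.single (⟨x.1, U1⟩ : SRCTn n) 1) =
                  Finsupp.single (⟨x.1, U2⟩ : SRCTn n) 1 := hU2
              rw [hU2]
              have f1 : pos x.1.1 U2 (i + 1) = pos x.1.1 x.2 i := by
                rw [pos_swap_hi U1 U2 hU2e hi1 h1s, e1]
              have f2 : pos x.1.1 U2 (i + 2) = pos x.1.1 x.2 (i + 1) := by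
                rw [pos_swap_other U1 U2 hU2e hi1 h1s (i + 2) (by omega) h2s
                  (by omega) (by omega), e3]
              have hD2'' : Descent x.1.1 U2 (i + 1) := by
                rw [descent_iff U2 (i + 1) hi1' h2s, f1, f2]; omega
              have hA2'' : Attacking x.1.1 U2 (i + 1) := by
                rw [attacking_iff U2 (i + 1) hi1' h2s, f1, f2]; omega
              rw [(hP (i + 1) hi1' hi2 ⟨x.1, U2⟩).2.1 hD2'' hA2'']
        · rw [(hP (i + 1) hi1' hi2 x).1 hD2, hz]
          simp only [map_zero]
      · -- S case for i
        obtain ⟨V1, hV1e, hV1⟩ := (hP i hi1 hin x).2.2 hD1 hA1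
        rw [hV1]
        replace hV1 : P i (Finsupp.single x 1) =
            Finsupp.single (⟨x.1, V1⟩ : SRCTn n) 1 := hV1
        have e1 : pos x.1.1 V1 i = pos x.1.1 x.2 (i + 1) := pos_swap_lo x.2 V1 hV1e hi1 h1s
        have e2 : pos x.1.1 V1 (i + 1) = pos x.1.1 x.2 i := pos_swap_hi x.2 V1 hV1e hi1 h1s
        have e3 : pos x.1.1 V1 (i + 2) = pos x.1.1 x.2 (i + 2) :=
          pos_swap_other x.2 V1 hV1e hi1 h1s (i + 2) (by omega) h2s (by omega) (by omega)
        have hc1 : (pos x.1.1 x.2 i).2 ≤ (pos x.1.1 x.2 (i + 1)).2 :=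
          (descent_iff x.2 i hi1 h1s).mp hD1
        have ha1 : ¬((pos x.1.1 x.2 (i + 1)).2 = (pos x.1.1 x.2 i).2 ∨
            ((pos x.1.1 x.2 (i + 1)).2 = (pos x.1.1 x.2 i).2 + 1 ∧
              (pos x.1.1 x.2 i).1 < (pos x.1.1 x.2 (i + 1)).1)) :=
          fun h => hA1 ((attacking_iff x.2 i hi1 h1s).mpr h)
        by_cases hD2' : Descent x.1.1 V1 (i + 1)
        · have hc13 : (pos x.1.1 x.2 i).2 ≤ (pos x.1.1 x.2 (i + 2)).2 := by
            have h := (descent_iff V1 (i + 1) hi1' h2s).mp hD2'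
            rw [e2, e3] at h; exact h
          by_cases hA2' : Attacking x.1.1 V1 (i + 1)
          · -- K at v1
            have ha13 : (pos x.1.1 x.2 (i + 2)).2 = (pos x.1.1 x.2 i).2 ∨
                ((pos x.1.1 x.2 (i + 2)).2 = (pos x.1.1 x.2 i).2 + 1 ∧
                  (pos x.1.1 x.2 i).1 < (pos x.1.1 x.2 (i + 2)).1) := by
              have h := (attacking_iff V1 (i + 1) hi1' h2s).mp hA2'
              rw [e2, e3] at h; exact h
            rw [(hP (i + 1) hi1' hi2 ⟨x.1, V1⟩).2.1 hD2' hA2']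
            simp only [map_zero]
            by_cases hD2 : Descent x.1.1 x.2 (i + 1)
            · by_cases hA2 : Attacking x.1.1 x.2 (i + 1)
              · rw [(hP (i + 1) hi1' hi2 x).2.1 hD2 hA2]
                simp only [map_zero]
              · exfalso
                have hc2 : (pos x.1.1 x.2 (i + 1)).2 ≤ (pos x.1.1 x.2 (i + 2)).2 :=
                  (descent_iff x.2 (i + 1) hi1' h2s).mp hD2
                have ha2 : ¬((pos x.1.1 x.2 (i + 2)).2 = (pos x.1.1 x.2 (i + 1)).2 ∨
                    ((pos x.1.1 x.2 (i + 2)).2 = (pos x.1.1 x.2 (i + 1)).2 + 1 ∧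
                      (pos x.1.1 x.2 (i + 1)).1 < (pos x.1.1 x.2 (i + 2)).1)) :=
                  fun h => hA2 ((attacking_iff x.2 (i + 1) hi1' h2s).mpr h)
                omega
            · rw [(hP (i + 1) hi1' hi2 x).1 hD2, hV1,
                (hP (i + 1) hi1' hi2 ⟨x.1, V1⟩).2.1 hD2' hA2']
          · -- S at v1
            obtain ⟨V2, hV2e, hV2⟩ := (hP (i + 1) hi1' hi2 ⟨x.1, V1⟩).2.2 hD2' hA2'
            replace hV2e : V2.entry = swapEntry x.1.1 V1 (i + 1) := hV2e
            replace hV2 : P (i + 1) (Finsupp.single (⟨x.1, V1⟩ : SRCTn n) 1) =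
                Finsupp.single (⟨x.1, V2⟩ : SRCTn n) 1 := hV2
            rw [hV2]
            have ha13 : ¬((pos x.1.1 x.2 (i + 2)).2 = (pos x.1.1 x.2 i).2 ∨
                ((pos x.1.1 x.2 (i + 2)).2 = (pos x.1.1 x.2 i).2 + 1 ∧
                  (pos x.1.1 x.2 i).1 < (pos x.1.1 x.2 (i + 2)).1)) :=
              fun h => hA2' ((attacking_iff V1 (i + 1) hi1' h2s).mpr (by rw [e2, e3]; exact h))
            have g1 : pos x.1.1 V2 i = pos x.1.1 x.2 (i + 1) := by
              rw [pos_swap_other V1 V2 hV2e hi1' h2s i hi1 (by omega) (by omega) (by omega), e1]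
            have g2 : pos x.1.1 V2 (i + 1) = pos x.1.1 x.2 (i + 2) := by
              rw [pos_swap_lo V1 V2 hV2e hi1' h2s, e3]
            have g3 : pos x.1.1 V2 (i + 2) = pos x.1.1 x.2 i := by
              rw [pos_swap_hi V1 V2 hV2e hi1' h2s, e2]
            by_cases hD1'' : Descent x.1.1 V2 i
            · have hc23 : (pos x.1.1 x.2 (i + 1)).2 ≤ (pos x.1.1 x.2 (i + 2)).2 := by
                have h := (descent_iff V2 i hi1 h1s).mp hD1''
                rw [g1, g2] at h; exact h
              by_cases hA1'' : Attacking x.1.1 V2 i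
              · -- K at v2 forces K of i+1 at x: both sides zero
                have ha23 : (pos x.1.1 x.2 (i + 2)).2 = (pos x.1.1 x.2 (i + 1)).2 ∨
                    ((pos x.1.1 x.2 (i + 2)).2 = (pos x.1.1 x.2 (i + 1)).2 + 1 ∧
                      (pos x.1.1 x.2 (i + 1)).1 < (pos x.1.1 x.2 (i + 2)).1) := by
                  have h := (attacking_iff V2 i hi1 h1s).mp hA1''
                  rw [g1, g2] at h; exact h
                rw [(hP i hi1 hin ⟨x.1, V2⟩).2.1 hD1'' hA1'']
                have hD2 : Descent x.1.1 x.2 (i + 1) :=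
                  (descent_iff x.2 (i + 1) hi1' h2s).mpr hc23
                have hA2 : Attacking x.1.1 x.2 (i + 1) :=
                  (attacking_iff x.2 (i + 1) hi1' h2s).mpr ha23
                rw [(hP (i + 1) hi1' hi2 x).2.1 hD2 hA2]
                simp only [map_zero]
              · -- SSS case
                have ha23 : ¬((pos x.1.1 x.2 (i + 2)).2 = (pos x.1.1 x.2 (i + 1)).2 ∨
                    ((pos x.1.1 x.2 (i + 2)).2 = (pos x.1.1 x.2 (i + 1)).2 + 1 ∧
                      (pos x.1.1 x.2 (i + 1)).1 < (pos x.1.1 x.2 (i + 2)).1)) :=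
                  fun h => hA1'' ((attacking_iff V2 i hi1 h1s).mpr (by rw [g1, g2]; exact h))
                obtain ⟨V3, hV3e, hV3⟩ := (hP i hi1 hin ⟨x.1, V2⟩).2.2 hD1'' hA1''
                replace hV3e : V3.entry = swapEntry x.1.1 V2 i := hV3e
                replace hV3 : P i (Finsupp.single (⟨x.1, V2⟩ : SRCTn n) 1) =
                    Finsupp.single (⟨x.1, V3⟩ : SRCTn n) 1 := hV3
                rw [hV3]
                have hD2 : Descent x.1.1 x.2 (i + 1) :=
                  (descent_iff x.2 (i + 1) hi1' h2s).mpr hc23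
                have hA2 : ¬ Attacking x.1.1 x.2 (i + 1) :=
                  fun h => ha23 ((attacking_iff x.2 (i + 1) hi1' h2s).mp h)
                obtain ⟨W1, hW1e, hW1⟩ := (hP (i + 1) hi1' hi2 x).2.2 hD2 hA2
                rw [hW1]
                have k1 : pos x.1.1 W1 i = pos x.1.1 x.2 i :=
                  pos_swap_other x.2 W1 hW1e hi1' h2s i hi1 (by omega) (by omega) (by omega)
                have k2 : pos x.1.1 W1 (i + 1) = pos x.1.1 x.2 (i + 2) :=
                  pos_swap_lo x.2 W1 hW1e hi1' h2s
                have k3 : pos x.1.1 W1 (i + 2) = pos x.1.1 x.2 (i + 1) :=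
                  pos_swap_hi x.2 W1 hW1e hi1' h2s
                have hDw : Descent x.1.1 W1 i := by
                  rw [descent_iff W1 i hi1 h1s, k1, k2]; omega
                have hAw : ¬ Attacking x.1.1 W1 i := by
                  rw [attacking_iff W1 i hi1 h1s, k1, k2]; omega
                obtain ⟨W2, hW2e, hW2⟩ := (hP i hi1 hin ⟨x.1, W1⟩).2.2 hDw hAw
                replace hW2e : W2.entry = swapEntry x.1.1 W1 i := hW2e
                replace hW2 : P i (Finsupp.single (⟨x.1, W1⟩ : SRCTn n) 1) =
                    Finsupp.single (⟨x.1, W2⟩ : SRCTn n) 1 := hW2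
                rw [hW2]
                have l1 : pos x.1.1 W2 (i + 1) = pos x.1.1 x.2 i := by
                  rw [pos_swap_hi W1 W2 hW2e hi1 h1s, k1]
                have l2 : pos x.1.1 W2 (i + 2) = pos x.1.1 x.2 (i + 1) := by
                  rw [pos_swap_other W1 W2 hW2e hi1 h1s (i + 2) (by omega) h2s
                    (by omega) (by omega), k3]
                have hDw2 : Descent x.1.1 W2 (i + 1) := by
                  rw [descent_iff W2 (i + 1) hi1' h2s, l1, l2]; omega
                have hAw2 : ¬ Attacking x.1.1 W2 (i + 1) := by
                  rw [attacking_iff W2 (i + 1) hi1' h2s, l1, l2]; omega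
                obtain ⟨W3, hW3e, hW3⟩ := (hP (i + 1) hi1' hi2 ⟨x.1, W2⟩).2.2 hDw2 hAw2
                replace hW3e : W3.entry = swapEntry x.1.1 W2 (i + 1) := hW3e
                replace hW3 : P (i + 1) (Finsupp.single (⟨x.1, W2⟩ : SRCTn n) 1) =
                    Finsupp.single (⟨x.1, W3⟩ : SRCTn n) 1 := hW3
                rw [hW3]
                have hVW : V3 = W3 :=
                  swap_entry_braid x.2 V1 V2 V3 W1 W2 W3 i hV1e hV2e hV3e hW1e hW2e hW3e
                rw [hVW]
            · -- F at v2
              rw [(hP i hi1 hin ⟨x.1, V2⟩).1 hD1'']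
              have hc32 : ¬ (pos x.1.1 x.2 (i + 1)).2 ≤ (pos x.1.1 x.2 (i + 2)).2 :=
                fun h => hD1'' ((descent_iff V2 i hi1 h1s).mpr (by rw [g1, g2]; exact h))
              have hD2 : ¬ Descent x.1.1 x.2 (i + 1) :=
                fun h => hc32 ((descent_iff x.2 (i + 1) hi1' h2s).mp h)
              rw [(hP (i + 1) hi1' hi2 x).1 hD2, hV1, hV2]
        · -- F at v1
          rw [(hP (i + 1) hi1' hi2 ⟨x.1, V1⟩).1 hD2']
          have hc31 : ¬ (pos x.1.1 x.2 i).2 ≤ (pos x.1.1 x.2 (i + 2)).2 :=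
            fun h => hD2' ((descent_iff V1 (i + 1) hi1' h2s).mpr (by rw [e2, e3]; exact h))
          have hnd1 : ¬ Descent x.1.1 V1 i := by
            rw [descent_iff V1 i hi1 h1s, e1, e2]; omega
          rw [(hP i hi1 hin ⟨x.1, V1⟩).1 hnd1]
          have hD2 : ¬ Descent x.1.1 x.2 (i + 1) := by
            intro h
            have hbd := (descent_iff x.2 (i + 1) hi1' h2s).mp h
            rw [show pos x.1.1 x.2 (i + 1 + 1) = pos x.1.1 x.2 (i + 2) from rfl] at hbd
            omega
          rw [(hP (i + 1) hi1' hi2 x).1 hD2, hV1,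
            (hP (i + 1) hi1' hi2 ⟨x.1, V1⟩).1 hD2']
    · -- F case for i
      have hf1 := (hP i hi1 hin x).1 hD1
      rw [hf1]
      have hc1 : ¬ (pos x.1.1 x.2 i).2 ≤ (pos x.1.1 x.2 (i + 1)).2 :=
        fun h => hD1 ((descent_iff x.2 i hi1 h1s).mpr h)
      by_cases hD2 : Descent x.1.1 x.2 (i + 1)
      · by_cases hA2 : Attacking x.1.1 x.2 (i + 1)
        · rw [(hP (i + 1) hi1' hi2 x).2.1 hD2 hA2]
          simp only [map_zero]
        · obtain ⟨U1, hU1e, hU1⟩ := (hP (i + 1) hi1' hi2 x).2.2 hD2 hA2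
          rw [hU1]
          have e1 : pos x.1.1 U1 i = pos x.1.1 x.2 i :=
            pos_swap_other x.2 U1 hU1e hi1' h2s i hi1 (by omega) (by omega) (by omega)
          have e2 : pos x.1.1 U1 (i + 1) = pos x.1.1 x.2 (i + 2) :=
            pos_swap_lo x.2 U1 hU1e hi1' h2s
          have e3 : pos x.1.1 U1 (i + 2) = pos x.1.1 x.2 (i + 1) :=
            pos_swap_hi x.2 U1 hU1e hi1' h2s
          have hc2 : (pos x.1.1 x.2 (i + 1)).2 ≤ (pos x.1.1 x.2 (i + 2)).2 :=
            (descent_iff x.2 (i + 1) hi1' h2s).mp hD2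
          have ha2 : ¬((pos x.1.1 x.2 (i + 2)).2 = (pos x.1.1 x.2 (i + 1)).2 ∨
              ((pos x.1.1 x.2 (i + 2)).2 = (pos x.1.1 x.2 (i + 1)).2 + 1 ∧
                (pos x.1.1 x.2 (i + 1)).1 < (pos x.1.1 x.2 (i + 2)).1)) :=
            fun h => hA2 ((attacking_iff x.2 (i + 1) hi1' h2s).mpr h)
          by_cases hD1' : Descent x.1.1 U1 i
          · by_cases hA1' : Attacking x.1.1 U1 i
            · rw [(hP i hi1 hin ⟨x.1, U1⟩).2.1 hD1' hA1']
              simp only [map_zero]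
            · obtain ⟨U2, hU2e, hU2⟩ := (hP i hi1 hin ⟨x.1, U1⟩).2.2 hD1' hA1'
              replace hU2e : U2.entry = swapEntry x.1.1 U1 i := hU2e
              replace hU2 : P i (Finsupp.single (⟨x.1, U1⟩ : SRCTn n) 1) =
                  Finsupp.single (⟨x.1, U2⟩ : SRCTn n) 1 := hU2
              rw [hU2]
              have f1 : pos x.1.1 U2 (i + 1) = pos x.1.1 x.2 i := by
                rw [pos_swap_hi U1 U2 hU2e hi1 h1s, e1]
              have f2 : pos x.1.1 U2 (i + 2) = pos x.1.1 x.2 (i + 1) := by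
                rw [pos_swap_other U1 U2 hU2e hi1 h1s (i + 2) (by omega) h2s
                  (by omega) (by omega), e3]
              have hnd : ¬ Descent x.1.1 U2 (i + 1) := by
                rw [descent_iff U2 (i + 1) hi1' h2s, f1, f2]; omega
              rw [(hP (i + 1) hi1' hi2 ⟨x.1, U2⟩).1 hnd]
          · rw [(hP i hi1 hin ⟨x.1, U1⟩).1 hD1']
            have hnd2 : ¬ Descent x.1.1 U1 (i + 1) := by
              rw [descent_iff U1 (i + 1) hi1' h2s, e2, e3]; omega
            rw [(hP (i + 1) hi1' hi2 ⟨x.1, U1⟩).1 hnd2]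
      · rw [(hP (i + 1) hi1' hi2 x).1 hD2, hf1, (hP (i + 1) hi1' hi2 x).1 hD2]
  · -- commuting relation
    intro i j hi1 hin hj1 hjn hij
    apply end_ext
    intro x
    have hsum : x.1.1.sum = n := x.1.2.2
    have hi2s : i + 1 ≤ x.1.1.sum := by omega
    have hj2s : j + 1 ≤ x.1.1.sum := by omega
    simp only [Module.End.mul_apply]
    by_cases hDi : Descent x.1.1 x.2 i
    · by_cases hAi : Attacking x.1.1 x.2 i
      · rw [(hP i hi1 hin x).2.1 hDi hAi, map_zero]
        by_cases hDj : Descent x.1.1 x.2 j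
        · by_cases hAj : Attacking x.1.1 x.2 j
          · rw [(hP j hj1 hjn x).2.1 hDj hAj, map_zero]
          · obtain ⟨U, hUe, hU⟩ := (hP j hj1 hjn x).2.2 hDj hAj
            rw [hU]
            have hst := status_invariant x.2 U hUe hi1 hj1 (Or.inl (by omega)) hi2s hj2s
            exact (hP i hi1 hin ⟨x.1, U⟩).2.1 (hst.1.mpr hDi) (hst.2.mpr hAi)
        · rw [(hP j hj1 hjn x).1 hDj, (hP i hi1 hin x).2.1 hDi hAi]
      · obtain ⟨V, hVe, hV⟩ := (hP i hi1 hin x).2.2 hDi hAi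
        replace hV : P i (Finsupp.single x 1) =
            Finsupp.single (⟨x.1, V⟩ : SRCTn n) 1 := hV
        by_cases hDj : Descent x.1.1 x.2 j
        · by_cases hAj : Attacking x.1.1 x.2 j
          · rw [(hP j hj1 hjn x).2.1 hDj hAj, map_zero, hV]
            have hst := status_invariant x.2 V hVe hj1 hi1 (Or.inr (by omega)) hj2s hi2s
            rw [(hP j hj1 hjn ⟨x.1, V⟩).2.1 (hst.1.mpr hDj) (hst.2.mpr hAj)]
          · obtain ⟨U, hUe, hU⟩ := (hP j hj1 hjn x).2.2 hDj hAj
            replace hU : P j (Finsupp.single x 1) =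
                Finsupp.single (⟨x.1, U⟩ : SRCTn n) 1 := hU
            rw [hU, hV]
            have hstU := status_invariant x.2 U hUe hi1 hj1 (Or.inl (by omega)) hi2s hj2s
            have hstV := status_invariant x.2 V hVe hj1 hi1 (Or.inr (by omega)) hj2s hi2s
            obtain ⟨UV, hUVe, hUV⟩ :=
              (hP i hi1 hin ⟨x.1, U⟩).2.2 (hstU.1.mpr hDi) (fun h => hAi (hstU.2.mp h))
            replace hUVe : UV.entry = swapEntry x.1.1 U i := hUVe
            replace hUV : P i (Finsupp.single (⟨x.1, U⟩ : SRCTn n) 1) =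
                Finsupp.single (⟨x.1, UV⟩ : SRCTn n) 1 := hUV
            obtain ⟨VU, hVUe, hVU⟩ :=
              (hP j hj1 hjn ⟨x.1, V⟩).2.2 (hstV.1.mpr hDj) (fun h => hAj (hstV.2.mp h))
            replace hVUe : VU.entry = swapEntry x.1.1 V j := hVUe
            replace hVU : P j (Finsupp.single (⟨x.1, V⟩ : SRCTn n) 1) =
                Finsupp.single (⟨x.1, VU⟩ : SRCTn n) 1 := hVU
            rw [hUV, hVU]
            have hc : UV = VU := swap_entry_comm x.2 U UV V VU i j hij hUe hUVe hVe hVUe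
            rw [hc]
        · rw [(hP j hj1 hjn x).1 hDj, hV]
          have hst := status_invariant x.2 V hVe hj1 hi1 (Or.inr (by omega)) hj2s hi2s
          rw [(hP j hj1 hjn ⟨x.1, V⟩).1 (fun h => hDj (hst.1.mp h))]
    · rw [(hP i hi1 hin x).1 hDi]
      by_cases hDj : Descent x.1.1 x.2 j
      · by_cases hAj : Attacking x.1.1 x.2 j
        · rw [(hP j hj1 hjn x).2.1 hDj hAj, map_zero]
        · obtain ⟨U, hUe, hU⟩ := (hP j hj1 hjn x).2.2 hDj hAj
          rw [hU]
          have hst := status_invariant x.2 U hUe hi1 hj1 (Or.inl (by omega)) hi2s hj2s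
          rw [(hP i hi1 hin ⟨x.1, U⟩).1 (fun h => hDi (hst.1.mp h))]
      · rw [(hP j hj1 hjn x).1 hDj, (hP i hi1 hin x).1 hDi]
end

section
/- Let α ⊨ n and τ ∈ SRCT(α). (1) If j ∈ des(τ) and j, j+1 are non-attacking, then the filling s_j(τ) obtained by interchanging the positions of j and j+1 in τ is again an SRCT of shape α. (2) If j ∉ des(τ) and j does not occupy the cell immediately to the right of j+1, then s_j(τ) is again an SRCT of shape α. -/
namespace SwapAux

/-- The permutation of ℕ swapping `j` and `j+1`. -/
def g (j x : ℕ) : ℕ := if x = j then j + 1 else if x = j + 1 then j else x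

lemma g_mono {j x y : ℕ} (h : x < y) (hne : ¬ (x = j ∧ y = j + 1)) : g j x < g j y := by
  unfold g; split_ifs <;> omega

lemma g_invol (j x : ℕ) : g j (g j x) = x := by
  unfold g; split_ifs <;> omega

lemma g_inj {j x y : ℕ} (h : g j x = g j y) : x = y := by
  have h2 := congrArg (g j) h; rwa [g_invol, g_invol] at h2

lemma g_zero {j : ℕ} (hj : 1 ≤ j) : g j 0 = 0 := by
  unfold g; rw [if_neg (by omega), if_neg (by omega)]

lemma g_one_le {j x : ℕ} (hj : 1 ≤ j) (h : 1 ≤ x) : 1 ≤ g j x := by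
  unfold g; split_ifs <;> omega

lemma g_le {j x s : ℕ} (hjs : j + 1 ≤ s) (h : x ≤ s) : g j x ≤ s := by
  unfold g; split_ifs <;> omega

end SwapAux

lemma cell_left {α : List ℕ} {r c : ℕ} (h : IsCell α r (c + 1)) : IsCell α r c :=
  ⟨h.1, Nat.lt_of_succ_lt h.2⟩

theorem swap_core (n : ℕ) (α : List ℕ) (hsum : α.sum = n) (T : SRCT α) (j : ℕ)
    (hj1 : 1 ≤ j) (hjn : j < n)
    (hA : ∀ r c r', IsCell α r c → IsCell α r' c →
      T.entry r c = j → T.entry r' c = j + 1 → False)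
    (hB : ∀ r c r', r < r' → IsCell α r c → IsCell α r' (c + 1) →
      T.entry r c = j → T.entry r' (c + 1) = j + 1 → False)
    (hC : ∀ r c, IsCell α r (c + 1) → T.entry r c = j + 1 → T.entry r (c + 1) = j → False) :
    ∃ T' : SRCT α, T'.entry = swapEntry α T j := by
  have hse : ∀ r c, swapEntry α T j r c = SwapAux.g j (T.entry r c) := fun r c => rfl
  have hjs : j + 1 ≤ α.sum := by omega
  refine ⟨⟨swapEntry α T j, ?_, ?_, ?_, ?_, ?_, ?_, ?_, ?_⟩, rfl⟩
  · intro r c h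
    rw [hse, T.zero_off r c h, SwapAux.g_zero hj1]
  · intro r c h
    rw [hse]; exact SwapAux.g_one_le hj1 (T.one_le r c h)
  · intro r c h
    rw [hse, hsum]
    exact SwapAux.g_le (by omega) (by rw [← hsum]; exact T.le_sum r c h)
  · intro r c r' c' h h' he
    rw [hse, hse] at he
    exact T.inj r c r' c' h h' (SwapAux.g_inj he)
  · intro m h1 h2
    obtain ⟨r, c, hc, he⟩ := T.surj (SwapAux.g j m) (SwapAux.g_one_le hj1 h1)
      (SwapAux.g_le hjs h2)
    exact ⟨r, c, hc, by rw [hse, he, SwapAux.g_invol]⟩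
  · intro r c h
    rw [hse, hse]
    exact SwapAux.g_mono (T.row_dec r c h) (fun ⟨e1, e2⟩ => hC r c h e2 e1)
  · intro r r' hlt h h'
    rw [hse, hse]
    exact SwapAux.g_mono (T.col1_inc r r' hlt h h') (fun ⟨e1, e2⟩ => hA r 0 r' h h' e1 e2)
  · intro r r' c hlt h h' hgt
    rw [hse, hse] at hgt
    have hab : T.entry r' (c + 1) < T.entry r c := by
      by_contra hnot
      push_neg at hnot
      rcases Nat.eq_or_lt_of_le hnot with heq | hlt2
      · have h2 := T.inj r c r' (c + 1) h h' heq
        omega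
      · by_cases hcase : T.entry r c = j ∧ T.entry r' (c + 1) = j + 1
        · exact hB r c r' hlt h h' hcase.1 hcase.2
        · exact absurd hgt (Nat.not_lt.mpr (Nat.le_of_lt (SwapAux.g_mono hlt2 hcase)))
    obtain ⟨hcell2, hbd⟩ := T.triple r r' c hlt h h' hab
    refine ⟨hcell2, ?_⟩
    rw [hse, hse]
    exact SwapAux.g_mono hbd (fun ⟨e1, e2⟩ => hA r' (c + 1) r h' hcell2 e1 e2)


/-- Lemma: swapping `i` and `i+1` yields an SRCT, both for a non-attacking descent and for a
non-descent `i` not immediately right of `i+1`. -/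
theorem swap_is_SRCT (n : ℕ) (α : List ℕ) (hpos : ∀ a ∈ α, 0 < a) (hsum : α.sum = n)
    (T : SRCT α) (j : ℕ) (hj1 : 1 ≤ j) (hjn : j < n) :
    (Descent α T j → ¬ Attacking α T j → ∃ T' : SRCT α, T'.entry = swapEntry α T j) ∧
    (¬ Descent α T j →
      (¬ ∃ r c, IsCell α r (c + 1) ∧ T.entry r c = j + 1 ∧ T.entry r (c + 1) = j) →
      ∃ T' : SRCT α, T'.entry = swapEntry α T j) := by
  constructor
  · intro hd hna
    obtain ⟨r1, c1, r2, c2, hc1, hc2, he1, he2, hle⟩ := hd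
    apply swap_core n α hsum T j hj1 hjn
    · intro r c r' hcr hcr' e1 e2
      exact hna ⟨r, c, r', c, hcr, hcr', e1, e2, Or.inl rfl⟩
    · intro r c r' hlt hcr hcr' e1 e2
      exact hna ⟨r, c, r', c + 1, hcr, hcr', e1, e2, Or.inr ⟨rfl, hlt⟩⟩
    · intro r c hcell e2 e1
      have h1 := T.inj r (c + 1) r1 c1 hcell hc1 (e1.trans he1.symm)
      have h2 := T.inj r c r2 c2 (cell_left hcell) hc2 (e2.trans he2.symm)
      omega
  · intro hnd hR
    apply swap_core n α hsum T j hj1 hjn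
    · intro r c r' hcr hcr' e1 e2
      exact hnd ⟨r, c, r', c, hcr, hcr', e1, e2, Nat.le_refl c⟩
    · intro r c r' hlt hcr hcr' e1 e2
      exact hnd ⟨r, c, r', c + 1, hcr, hcr', e1, e2, by omega⟩
    · intro r c hcell e2 e1
      exact hR ⟨r, c, hcell, e2, e1⟩
end

section
/- Let α ⊨ n and τ_1 ∈ SRCT(α), and suppose i ∈ des(τ_1) is a non-attacking descent, so that τ_2 = π_i(τ_1) = s_i(τ_1) is an SRCT. Then ℓ(col_{τ_2}) = ℓ(col_{τ_1}) + 1, and col_{τ_1} ≤_L col_{τ_2} in the left weak Bruhat order on the symmetric group S_n. -/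
def maxPart (α : List ℕ) : ℕ := α.foldr max 0

/-- The entries of column `c` of `T`, read from top to bottom. -/
def colList (α : List ℕ) (T : SRCT α) (c : ℕ) : List ℕ :=
  (List.range α.length).filterMap fun r => if IsCell α r c then some (T.entry r c) else none

/-- The column word of `T`: entries of each column read top to bottom, columns left to right,
viewed as a permutation of `{1,…,n}` in one-line notation. -/
def colWord (α : List ℕ) (T : SRCT α) : List ℕ :=
  (List.range (maxPart α)).flatMap fun c => colList α T c

/-- The inversion set of a one-line word: pairs of positions `p < q` with `w_p > w_q`. -/
def invFinset (w : List ℕ) : Finset (ℕ × ℕ) :=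
  (Finset.range w.length ×ˢ Finset.range w.length).filter fun pq =>
    pq.1 < pq.2 ∧ w.getD pq.2 0 < w.getD pq.1 0

/-- The number of inversions, i.e. the Coxeter length of the one-line word. -/
def invCount (w : List ℕ) : ℕ := (invFinset w).card

/-!
Because a descent puts `i + 1` weakly right of `i` and a non-attacking pair never shares a
column, `i + 1` lies in a strictly later column than `i`, so `i` precedes `i + 1` in the
column word. Interchanging the values `i` and `i + 1` of a word without repetitions preserves
the relative order of the values at every pair of positions except the positions of `i` and
`i + 1`, where a new inversion appears; hence the inversion set grows by exactly that pair.
-/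

open Equiv
open scoped List

theorem List.pair_sublist_flatMap {α β : Type*} {l : List α} {f : α → List β} {a b : α}
    {x y : β} (hab : [a, b] <+ l) (hx : x ∈ f a) (hy : y ∈ f b) : [x, y] <+ l.flatMap f := by
  have hxy : [x, y] <+ [a, b].flatMap f := by
    simpa using (List.singleton_sublist.mpr hx).append (List.singleton_sublist.mpr hy)
  exact hxy.trans (hab.flatMap f)

theorem List.pair_sublist_range {a b n : ℕ} (hab : a < b) (hb : b < n) :
    [a, b] <+ List.range n := by
  refine List.sublist_of_subperm_of_pairwise (r := (· < ·)) ?_ (by simpa using hab)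
    List.pairwise_lt_range
  refine List.subperm_of_subset (by simpa using hab.ne) ?_
  simp only [List.cons_subset, List.mem_range, List.nil_subset, and_true]
  omega

theorem swap_succ_lt_swap_succ_iff {i a b : ℕ} (hab : ¬(a = i ∧ b = i + 1))
    (hba : ¬(a = i + 1 ∧ b = i)) : swap i (i + 1) a < swap i (i + 1) b ↔ a < b := by
  simp only [swap_apply_def]
  split_ifs <;> omega

theorem mem_invFinset {w : List ℕ} {p q : ℕ} :
    (p, q) ∈ invFinset w ↔ p < q ∧ q < w.length ∧ w.getD q 0 < w.getD p 0 := by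
  simp only [invFinset, Finset.mem_filter, Finset.mem_product, Finset.mem_range]
  omega

theorem invFinset_map_swap_succ {w : List ℕ} (hw : w.Nodup) {i p q : ℕ} (hpq : p < q)
    (hq : q < w.length) (hwp : w.getD p 0 = i) (hwq : w.getD q 0 = i + 1) :
    invFinset (w.map (swap i (i + 1))) = insert (p, q) (invFinset w) := by
  have hinj : ∀ {a b}, a < w.length → b < w.length → w.getD a 0 = w.getD b 0 → a = b :=
    fun ha hb h => by
      simp only [List.getD_eq_getElem _ _ ha, List.getD_eq_getElem _ _ hb] at h
      exact (hw.getElem_inj_iff).mp h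
  ext ⟨a, b⟩
  simp only [mem_invFinset, Finset.mem_insert, Prod.mk.injEq, List.length_map]
  by_cases hab : a < b ∧ b < w.length
  · have hmap : ∀ k, k < w.length →
        (w.map (swap i (i + 1))).getD k 0 = swap i (i + 1) (w.getD k 0) := fun k hk => by
      rw [List.getD_eq_getElem _ _ (by simpa using hk), List.getD_eq_getElem _ _ hk,
        List.getElem_map]
    rw [hmap a (by omega), hmap b hab.2]
    by_cases hpair : a = p ∧ b = q
    · obtain ⟨rfl, rfl⟩ := hpair
      rw [hwp, hwq, swap_apply_left, swap_apply_right]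
      simpa using hab
    · have hne : ¬(w.getD b 0 = i ∧ w.getD a 0 = i + 1) := fun ⟨hb, ha⟩ => by
        have := hinj hab.2 (hpq.trans hq) (hb.trans hwp.symm)
        have := hinj (by omega) hq (ha.trans hwq.symm)
        omega
      have hne' : ¬(w.getD b 0 = i + 1 ∧ w.getD a 0 = i) := fun ⟨hb, ha⟩ =>
        hpair ⟨hinj (by omega) (hpq.trans hq) (ha.trans hwp.symm),
          hinj hab.2 hq (hb.trans hwq.symm)⟩
      rw [swap_succ_lt_swap_succ_iff hne hne']
      tauto
  · have hpair : ¬(a = p ∧ b = q) := by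
      rintro ⟨rfl, rfl⟩
      exact hab ⟨hpq, hq⟩
    tauto

theorem exists_invFinset_map_swap_succ_eq_insert {w : List ℕ} (hw : w.Nodup) {i : ℕ}
    (h : [i, i + 1] <+ w) :
    ∃ pq ∉ invFinset w, invFinset (w.map (swap i (i + 1))) = insert pq (invFinset w) := by
  obtain ⟨f, hf⟩ := List.sublist_iff_exists_fin_orderEmbedding_get_eq.mp h
  set p : ℕ := (f ⟨0, by simp⟩).val
  set q : ℕ := (f ⟨1, by simp⟩).val
  have hpq : p < q := f.strictMono (Fin.mk_lt_mk.mpr zero_lt_one)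
  have hq : q < w.length := (f _).isLt
  have hwp : w.getD p 0 = i := by
    rw [List.getD_eq_getElem _ _ (f _).isLt]; exact (hf ⟨0, by simp⟩).symm
  have hwq : w.getD q 0 = i + 1 := by
    rw [List.getD_eq_getElem _ _ hq]; exact (hf ⟨1, by simp⟩).symm
  refine ⟨(p, q), ?_, invFinset_map_swap_succ hw hpq hq hwp hwq⟩
  rw [mem_invFinset, hwp, hwq]
  omega

theorem invCount_map_swap_succ {w : List ℕ} (hw : w.Nodup) {i : ℕ} (h : [i, i + 1] <+ w) :
    invCount (w.map (swap i (i + 1))) = invCount w + 1 := by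
  obtain ⟨pq, hpq, heq⟩ := exists_invFinset_map_swap_succ_eq_insert hw h
  rw [invCount, invCount, heq, Finset.card_insert_of_notMem hpq]

theorem invFinset_subset_map_swap_succ {w : List ℕ} (hw : w.Nodup) {i : ℕ}
    (h : [i, i + 1] <+ w) : invFinset w ⊆ invFinset (w.map (swap i (i + 1))) := by
  obtain ⟨pq, -, heq⟩ := exists_invFinset_map_swap_succ_eq_insert hw h
  exact heq ▸ Finset.subset_insert pq _

section Tableau

variable {α : List ℕ}

theorem lt_maxPart_of_isCell {r c : ℕ} (h : IsCell α r c) : c < maxPart α :=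
  List.le_max_of_le' 0 (List.getD_eq_getElem _ _ h.1 ▸ List.getElem_mem h.1) h.2

theorem mem_colList_iff {T : SRCT α} {c x : ℕ} :
    x ∈ colList α T c ↔ ∃ r, IsCell α r c ∧ T.entry r c = x := by
  simp only [colList, List.mem_filterMap, List.mem_range]
  constructor
  · rintro ⟨r, -, h⟩
    split_ifs at h with hc
    exact ⟨r, hc, Option.some.inj h⟩
  · rintro ⟨r, hcell, rfl⟩
    exact ⟨r, hcell.1, if_pos hcell⟩

theorem nodup_colList (T : SRCT α) (c : ℕ) : (colList α T c).Nodup := by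
  refine List.Nodup.filterMap ?_ List.nodup_range
  intro r r' x hx hx'
  simp only [Option.mem_def] at hx hx'
  split_ifs at hx hx' with hr hr'
  exact (T.inj r c r' c hr hr' (Option.some.inj (hx.trans hx'.symm))).1

theorem nodup_colWord (T : SRCT α) : (colWord α T).Nodup := by
  refine List.nodup_flatMap.mpr ⟨fun c _ => nodup_colList T c,
    List.pairwise_lt_range.imp fun {c c'} hcc x hx hx' => ?_⟩
  obtain ⟨r, hr, rfl⟩ := mem_colList_iff.mp hx
  obtain ⟨r', hr', hrr'⟩ := mem_colList_iff.mp hx'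
  exact hcc.ne (T.inj r c r' c' hr hr' hrr'.symm).2

theorem pair_sublist_colWord (T : SRCT α) {r c r' c' : ℕ} (h : IsCell α r c)
    (h' : IsCell α r' c') (hcc : c < c') :
    [T.entry r c, T.entry r' c'] <+ colWord α T :=
  List.pair_sublist_flatMap (List.pair_sublist_range hcc (lt_maxPart_of_isCell h'))
    (mem_colList_iff.mpr ⟨r, h, rfl⟩) (mem_colList_iff.mpr ⟨r', h', rfl⟩)

theorem pair_sublist_colWord_of_descent {T : SRCT α} {i : ℕ} (hd : Descent α T i)
    (hna : ¬ Attacking α T i) : [i, i + 1] <+ colWord α T := by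
  obtain ⟨r, c, r', c', h, h', rfl, hi, hcc⟩ := hd
  have hne : c' ≠ c := fun he => hna ⟨r, c, r', c', h, h', rfl, hi, Or.inl he⟩
  exact hi ▸ pair_sublist_colWord T h h' (lt_of_le_of_ne hcc hne.symm)

theorem colWord_eq_map_swap {T T' : SRCT α} {i : ℕ} (h : T'.entry = swapEntry α T i) :
    colWord α T' = (colWord α T).map (swap i (i + 1)) := by
  simp only [colWord, colList, List.map_flatMap, List.map_filterMap, h, swapEntry]
  congr! 3 with c _ r
  split_ifs <;> simp_all [swap_apply_def]

end Tableau

theorem flip_length_and_weak_order_general (α : List ℕ) (T1 T2 : SRCT α) (i : ℕ)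
    (hd : Descent α T1 i) (hna : ¬ Attacking α T1 i)
    (hswap : T2.entry = swapEntry α T1 i) :
    invCount (colWord α T2) = invCount (colWord α T1) + 1 ∧
    invFinset (colWord α T1) ⊆ invFinset (colWord α T2) := by
  have hw := nodup_colWord T1
  have hsub := pair_sublist_colWord_of_descent hd hna
  rw [colWord_eq_map_swap hswap]
  exact ⟨invCount_map_swap_succ hw hsub, invFinset_subset_map_swap_succ hw hsub⟩

/-- A flip at a non-attacking descent increases the Coxeter length of the column word by
exactly one, and goes up in the left weak Bruhat order (inversion sets of one-line words). -/
theorem flip_length_and_weak_order (n : ℕ) (α : List ℕ) (hpos : ∀ a ∈ α, 0 < a)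
    (hsum : α.sum = n) (T1 T2 : SRCT α) (i : ℕ)
    (hd : Descent α T1 i) (hna : ¬ Attacking α T1 i)
    (hswap : T2.entry = swapEntry α T1 i) :
    invCount (colWord α T2) = invCount (colWord α T1) + 1 ∧
    invFinset (colWord α T1) ⊆ invFinset (colWord α T2) :=
  flip_length_and_weak_order_general α T1 T2 i hd hna hswap
end

section
/- Let α ⊨ n, τ ∈ SRCT(α), and suppose i is a non-attacking descent of τ, so that π_i(τ) = s_i(τ) ∈ SRCT(α). Then st(s_i(τ)) = st(τ). Consequently, for every equivalence class E of SRCT(α) under ∼_α, the complex span S_{α,E} of the tableaux in E satisfies π_i(S_{α,E}) ⊆ S_{α,E} for all 1 ≤ i ≤ n−1. -/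
/-- The standardization of a word with distinct letters, with ranks `1,…,len`. -/
def stdWord (w : List ℕ) : List ℕ :=
  w.map fun x => (w.filter fun y => decide (y ≤ x)).length

/-- The standardized column word of `T`: concatenation over columns (left to right) of the
standardizations of the column reading words (top to bottom). -/
def stWord (α : List ℕ) (T : SRCT α) : List ℕ :=
  (List.range (maxPart α)).flatMap fun c => stdWord (colList α T c)

/-- The equivalence class of `T0` under `∼_α` (equal standardized column words). -/
def stClass (α : List ℕ) (T0 : SRCT α) : Set (SRCT α) := {T | stWord α T = stWord α T0}

/-- `P` is the family of linear operators induced by the `0`-Hecke operators `π_i` on the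
complex vector space with basis `SRCT α`:  `π_i τ = τ` if `i ∉ des(τ)`, `π_i τ = 0` if `i` is
an attacking descent, and `π_i τ = s_i(τ)` if `i` is a non-attacking descent. -/
def PiChar (α : List ℕ) (P : ℕ → Module.End ℂ (SRCT α →₀ ℂ)) : Prop :=
  ∀ i : ℕ, 1 ≤ i → i < α.sum → ∀ T : SRCT α,
    (¬ Descent α T i → P i (Finsupp.single T 1) = Finsupp.single T 1) ∧
    (Descent α T i → Attacking α T i → P i (Finsupp.single T 1) = 0) ∧
    (Descent α T i → ¬ Attacking α T i →
      ∃ T' : SRCT α, T'.entry = swapEntry α T i ∧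
        P i (Finsupp.single T 1) = Finsupp.single T' 1)

/-- The value-level swap of `i` and `i+1`. -/
def gswap (i x : ℕ) : ℕ := if x = i then i + 1 else if x = i + 1 then i else x

lemma gswap_le_iff (i a b : ℕ) (h1 : ¬(a = i ∧ b = i + 1)) (h2 : ¬(a = i + 1 ∧ b = i)) :
    gswap i b ≤ gswap i a ↔ b ≤ a := by
  unfold gswap; split_ifs <;> omega

lemma stdWord_map_gswap (i : ℕ) (l : List ℕ)
    (h : ∀ a ∈ l, ∀ b ∈ l, (gswap i b ≤ gswap i a ↔ b ≤ a)) :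
    stdWord (l.map (gswap i)) = stdWord l := by
  unfold stdWord
  rw [List.map_map]
  apply List.map_congr_left
  intro a ha
  simp only [Function.comp_apply]
  rw [List.filter_map, List.length_map]
  congr 1
  apply List.filter_congr
  intro b hb
  simp only [Function.comp_apply, decide_eq_decide]
  exact h a ha b hb

lemma colList_swap (α : List ℕ) (T T' : SRCT α) (i : ℕ)
    (hT' : T'.entry = swapEntry α T i) (c : ℕ) :
    colList α T' c = (colList α T c).map (gswap i) := by
  unfold colList
  rw [List.map_filterMap]
  congr 1
  funext r
  by_cases h : IsCell α r c
  · simp [h, hT', swapEntry, gswap]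
  · simp [h]

lemma mem_colList (α : List ℕ) (T : SRCT α) (c a : ℕ) (h : a ∈ colList α T c) :
    ∃ r, IsCell α r c ∧ T.entry r c = a := by
  unfold colList at h
  simp only [List.mem_filterMap, List.mem_range] at h
  obtain ⟨r, _, h⟩ := h
  by_cases hc : IsCell α r c
  · rw [if_pos hc] at h
    exact ⟨r, hc, Option.some.inj h⟩
  · rw [if_neg hc] at h
    exact absurd h (by simp)

lemma flip_stWord (α : List ℕ) (T T' : SRCT α) (i : ℕ)
    (hd : Descent α T i) (hna : ¬ Attacking α T i)
    (hT' : T'.entry = swapEntry α T i) : stWord α T' = stWord α T := by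
  obtain ⟨r0, c0, r1, c1, hcell0, hcell1, he0, he1, _⟩ := hd
  have hc01 : c0 ≠ c1 := fun h =>
    hna ⟨r0, c0, r1, c1, hcell0, hcell1, he0, he1, Or.inl h.symm⟩
  unfold stWord
  congr 1
  funext c
  rw [colList_swap α T T' i hT' c]
  apply stdWord_map_gswap
  intro a ha b hb
  obtain ⟨ra, hca, hea⟩ := mem_colList α T c a ha
  obtain ⟨rb, hcb, heb⟩ := mem_colList α T c b hb
  apply gswap_le_iff
  · rintro ⟨rfl, rfl⟩
    exact hc01 (((T.inj ra c r0 c0 hca hcell0 (hea.trans he0.symm)).2).symm ▸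
      (T.inj rb c r1 c1 hcb hcell1 (heb.trans he1.symm)).2)
  · rintro ⟨rfl, rfl⟩
    exact hc01 (((T.inj rb c r0 c0 hcb hcell0 (heb.trans he0.symm)).2).symm ▸
      (T.inj ra c r1 c1 hca hcell1 (hea.trans he1.symm)).2)

/-- A flip at a non-attacking descent preserves the standardized column word; consequently
the span of each `∼_α`-equivalence class is invariant under all the operators `π_i`. -/
theorem flip_preserves_stword_and_class_span_invariant (n : ℕ) (α : List ℕ)
    (hpos : ∀ a ∈ α, 0 < a) (hsum : α.sum = n) :
    (∀ (T T' : SRCT α) (i : ℕ), Descent α T i → ¬ Attacking α T i →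
        T'.entry = swapEntry α T i → stWord α T' = stWord α T) ∧
    (∀ P : ℕ → Module.End ℂ (SRCT α →₀ ℂ), PiChar α P →
      ∀ i, 1 ≤ i → i < n → ∀ T0 : SRCT α,
        Submodule.map (P i)
            (Submodule.span ℂ {x | ∃ T ∈ stClass α T0, x = Finsupp.single T (1 : ℂ)}) ≤
          Submodule.span ℂ {x | ∃ T ∈ stClass α T0, x = Finsupp.single T (1 : ℂ)}) := by
  refine ⟨fun T T' i hd hna hT' => flip_stWord α T T' i hd hna hT', ?_⟩
  intro P hP i hi1 hin T0
  rw [Submodule.map_span_le]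
  rintro x ⟨T, hT, rfl⟩
  have hspec := hP i hi1 (by omega) T
  by_cases hd : Descent α T i
  · by_cases ha : Attacking α T i
    · rw [hspec.2.1 hd ha]
      exact Submodule.zero_mem _
    · obtain ⟨T', hT'e, hPT⟩ := hspec.2.2 hd ha
      rw [hPT]
      refine Submodule.subset_span ⟨T', ?_, rfl⟩
      show stWord α T' = stWord α T0
      rw [flip_stWord α T T' i hd ha hT'e]
      exact hT
  · rw [hspec.1 hd]
    exact Submodule.subset_span ⟨T, hT, rfl⟩
end

section
/- Let α ⊨ n and τ_1 ∈ SRCT(α). Then the following are equivalent: (1) τ_1 is a source tableau, i.e., for every i ∉ des(τ_1) with i ≠ n, the entry i+1 lies in the cell immediately to the left of the cell containing i; (2) there does not exist an SRCT τ_2 ≠ τ_1 of shape α such that π_i(τ_2) = τ_1 for some positive integer i. -/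
/-- `T` is a source tableau: for every non-descent `i ≠ n`, the entry `i+1` lies in the cell
immediately to the left of the cell containing `i`. -/
def IsSource (α : List ℕ) (T : SRCT α) : Prop :=
  ∀ i, 1 ≤ i → i < α.sum → ¬ Descent α T i →
    ∃ r c, IsCell α r (c + 1) ∧ T.entry r c = i + 1 ∧ T.entry r (c + 1) = i

/-- `T` is a sink tableau: every descent of `T` is an attacking descent. -/
def IsSink (α : List ℕ) (T : SRCT α) : Prop := ∀ i, Descent α T i → Attacking α T i

namespace SwapAux

/-- The value swap `i ↔ i+1`. -/
def f (i x : ℕ) : ℕ := if x = i then i + 1 else if x = i + 1 then i else x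

lemma f_f (i x : ℕ) : f i (f i x) = x := by
  unfold f; split_ifs <;> first | omega | simp_all

lemma swap_eq (α : List ℕ) (T : SRCT α) (i r c : ℕ) :
    swapEntry α T i r c = f i (T.entry r c) := rfl

lemma f_lt (i a b : ℕ) (h : a < b) (hex : ¬(a = i ∧ b = i + 1)) : f i a < f i b := by
  unfold f; split_ifs <;> first | omega | simp_all

lemma lt_of_f_lt (i a b : ℕ) (h : f i a < f i b) : a < b ∨ (a = i + 1 ∧ b = i) := by
  unfold f at h; split_ifs at h <;> omega

lemma cell_left {α : List ℕ} {x y : ℕ} (h : IsCell α x (y + 1)) : IsCell α x y :=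
  ⟨h.1, by have := h.2; omega⟩

lemma row_mono (α : List ℕ) (T : SRCT α) (x y : ℕ) :
    ∀ d, IsCell α x (y + d) → T.entry x (y + d) ≤ T.entry x y := by
  intro d
  induction d with
  | zero => intro _; exact le_refl _
  | succ d ih =>
    intro h
    have h1 : IsCell α x (y + d + 1) := h
    have h' : IsCell α x (y + d) := cell_left h1
    have h2 := T.row_dec x (y + d) h1
    have h3 := ih h'
    show T.entry x (y + d + 1) ≤ T.entry x y
    omega

lemma swap_srct (α : List ℕ) (T : SRCT α) (i : ℕ) (hi1 : 1 ≤ i) (hisum : i + 1 ≤ α.sum)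
    (r c p q : ℕ) (hrc : IsCell α r c) (hpq : IsCell α p q)
    (hTi : T.entry r c = i) (hTi1 : T.entry p q = i + 1)
    (hq : q < c) (hpr : p ≠ r) :
    ∃ T2 : SRCT α, T2.entry = swapEntry α T i := by
  refine ⟨⟨swapEntry α T i, ?_, ?_, ?_, ?_, ?_, ?_, ?_, ?_⟩, rfl⟩
  · -- zero_off
    intro x y h
    rw [swap_eq, T.zero_off x y h]
    unfold f; split_ifs <;> first | omega | simp_all
  · -- one_le
    intro x y h
    have := T.one_le x y h
    rw [swap_eq]; unfold f; split_ifs <;> first | omega | simp_all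
  · -- le_sum
    intro x y h
    have := T.le_sum x y h
    rw [swap_eq]; unfold f; split_ifs <;> first | omega | simp_all
  · -- inj
    intro x y x' y' hx hx' he
    rw [swap_eq, swap_eq] at he
    have : T.entry x y = T.entry x' y' := by
      have := congrArg (f i) he
      rwa [f_f, f_f] at this
    exact T.inj x y x' y' hx hx' this
  · -- surj
    intro m hm1 hm2
    have h1 : 1 ≤ f i m := by unfold f; split_ifs <;> first | omega | simp_all
    have h2 : f i m ≤ α.sum := by unfold f; split_ifs <;> first | omega | simp_all
    obtain ⟨x, y, hx, he⟩ := T.surj (f i m) h1 h2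
    exact ⟨x, y, hx, by rw [swap_eq, he, f_f]⟩
  · -- row_dec
    intro x y h
    rw [swap_eq, swap_eq]
    refine f_lt i _ _ (T.row_dec x y h) ?_
    rintro ⟨h1, h2⟩
    have e1 := T.inj x (y + 1) r c h hrc (by rw [h1, hTi])
    have e2 := T.inj x y p q (cell_left h) hpq (by rw [h2, hTi1])
    exact hpr (e2.1 ▸ e1.1 ▸ rfl)
  · -- col1_inc
    intro x x' hxx' h0 h0'
    rw [swap_eq, swap_eq]
    refine f_lt i _ _ (T.col1_inc x x' hxx' h0 h0') ?_
    rintro ⟨h1, _⟩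
    have e1 := T.inj x 0 r c h0 hrc (by rw [h1, hTi])
    omega
  · -- triple
    intro a b k hab hak hbk1 hlt
    rw [swap_eq, swap_eq] at hlt
    rcases lt_of_f_lt i _ _ hlt with h | ⟨h1, h2⟩
    · obtain ⟨hcell, hw⟩ := T.triple a b k hab hak hbk1 h
      refine ⟨hcell, ?_⟩
      rw [swap_eq, swap_eq]
      refine f_lt i _ _ hw ?_
      rintro ⟨e1, e2⟩
      have u1 := T.inj b (k + 1) r c hbk1 hrc (by rw [e1, hTi])
      have u2 := T.inj a (k + 1) p q hcell hpq (by rw [e2, hTi1])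
      omega
    · have u1 := T.inj b (k + 1) p q hbk1 hpq (by rw [h1, hTi1])
      have u2 := T.inj a k r c hak hrc (by rw [h2, hTi])
      omega

end SwapAux

open SwapAux in
/-- `T1` is a source tableau iff no other SRCT `T2` satisfies `π_i(T2) = T1` for some `i`. -/
theorem source_tableau_characterization (n : ℕ) (α : List ℕ) (hpos : ∀ a ∈ α, 0 < a)
    (hsum : α.sum = n) (T1 : SRCT α) :
    IsSource α T1 ↔
      ¬ ∃ (T2 : SRCT α) (i : ℕ), T2 ≠ T1 ∧ Descent α T2 i ∧ ¬ Attacking α T2 i ∧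
        T1.entry = swapEntry α T2 i := by
  constructor
  · -- Source → no such T2
    rintro hsrc ⟨T2, i, hne, hdes, hnatt, hentry⟩
    obtain ⟨a, b, a', b', hab, hab', e1, e2, hle⟩ := hdes
    have hT1 : ∀ x y, T1.entry x y = f i (T2.entry x y) := by
      intro x y; rw [hentry]; rfl
    have hT2 : ∀ x y, T2.entry x y = f i (T1.entry x y) := by
      intro x y; rw [hT1, f_f]
    have hi1 : 1 ≤ i := by have := T2.one_le a b hab; omega
    have hilt : i < α.sum := by have := T2.le_sum a' b' hab'; omega
    -- i is not a descent of T1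
    have hndes : ¬ Descent α T1 i := by
      rintro ⟨x, y, x', y', hx, hx', f1, f2, hle'⟩
      have g1 : T2.entry x y = i + 1 := by
        rw [hT2, f1]; unfold f; simp
      have g2 : T2.entry x' y' = i := by
        rw [hT2, f2]; unfold f; split_ifs <;> first | omega | simp_all
      have u1 := T2.inj x y a' b' hx hab' (by rw [g1, e2])
      have u2 := T2.inj x' y' a b hx' hab (by rw [g2, e1])
      -- so y = b', y' = b, and y ≤ y' gives b' ≤ b; with b ≤ b' get b = b'
      exact hnatt ⟨a, b, a', b', hab, hab', e1, e2, Or.inl (by omega)⟩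
    obtain ⟨x, y, hcell, f1, f2⟩ := hsrc i hi1 hilt hndes
    have g1 : T2.entry x y = i := by rw [hT2, f1]; unfold f; split_ifs <;> first | omega | simp_all
    have g2 : T2.entry x (y + 1) = i + 1 := by rw [hT2, f2]; unfold f; simp
    have := T2.row_dec x y hcell
    omega
  · -- No such T2 → source
    intro h i hi1 hilt hndes
    by_contra hno
    obtain ⟨r, c, hrc, hTi⟩ := T1.surj i hi1 (by omega)
    obtain ⟨p, q, hpq, hTi1⟩ := T1.surj (i + 1) (by omega) (by omega)
    have hq : q < c := by
      by_contra hcq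
      exact hndes ⟨r, c, p, q, hrc, hpq, hTi, hTi1, by omega⟩
    have hpr : p ≠ r := by
      intro hepr
      rw [hepr] at hpq hTi1
      -- row p contains i+1 at column q and i at column c > q
      have hc1 : IsCell α r (q + 1) := ⟨hrc.1, by have := hrc.2; omega⟩
      have hmono : T1.entry r c ≤ T1.entry r (q + 1) := by
        have := row_mono α T1 r (q + 1) (c - (q + 1))
          (by rwa [show q + 1 + (c - (q + 1)) = c by omega])
        rwa [show q + 1 + (c - (q + 1)) = c by omega] at this
      have hdec := T1.row_dec r q hc1
      have hval : T1.entry r (q + 1) = i := by omega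
      have := T1.inj r (q + 1) r c hc1 hrc (by rw [hval, hTi])
      have hcq1 : c = q + 1 := by omega
      exact hno ⟨r, q, by rwa [← hcq1], hTi1, by rw [← hcq1]; exact hTi⟩
    -- the configuration c = q+1 ∧ p < r is impossible in T1
    have hconf : ¬ (c = q + 1 ∧ p < r) := by
      rintro ⟨hc, hplt⟩
      subst hc
      obtain ⟨hcell, hgt⟩ := T1.triple p r q hplt hpq hrc (by omega)
      have := T1.row_dec p q hcell
      omega
    obtain ⟨T2, hT2e⟩ := swap_srct α T1 i hi1 (by omega) r c p q hrc hpq hTi hTi1 hq hpr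
    have hT2 : ∀ x y, T2.entry x y = f i (T1.entry x y) := by
      intro x y; rw [hT2e]; rfl
    refine h ⟨T2, i, ?_, ?_, ?_, ?_⟩
    · -- T2 ≠ T1
      intro he
      have : T2.entry r c = T1.entry r c := by rw [he]
      rw [hT2, hTi] at this
      unfold f at this
      simp at this
    · -- Descent α T2 i
      refine ⟨p, q, r, c, hpq, hrc, ?_, ?_, by omega⟩
      · rw [hT2, hTi1]; unfold f; split_ifs <;> first | omega | simp_all
      · rw [hT2, hTi]; unfold f; simp
    · -- ¬ Attacking α T2 i
      rintro ⟨x, y, x', y', hx, hx', f1, f2, hor⟩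
      have g1 : T1.entry x y = i + 1 := by
        have := congrArg (f i) (hT2 x y)
        rw [f_f] at this
        rw [← this, f1]; unfold f; simp
      have g2 : T1.entry x' y' = i := by
        have := congrArg (f i) (hT2 x' y')
        rw [f_f] at this
        rw [← this, f2]; unfold f; split_ifs <;> first | omega | simp_all
      have u1 := T1.inj x y p q hx hpq (by rw [g1, hTi1])
      have u2 := T1.inj x' y' r c hx' hrc (by rw [g2, hTi])
      rcases hor with h1 | ⟨h1, h2⟩
      · omega
      · exact hconf ⟨by omega, by omega⟩
    · -- T1.entry = swapEntry α T2 i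
      funext x y
      rw [swap_eq, hT2, f_f]
end

section
/- Let α ⊨ n and let E be an equivalence class of SRCT(α) under the equivalence relation ∼_α. Then E contains at least one source tableau and at least one sink tableau of shape α. -/
/-!
Interchanging consecutive entries `i`, `i + 1` of an SRCT that lie in different columns, with
the right one strictly higher when the columns are adjacent, gives another SRCT; since no column
contains both entries, the standardized column word does not change. For a non-attacking descent
this moves `i + 1` to the left and lowers `∑ c · T(r, c)`; for a non-descent `i` whose `i + 1`
is not immediately to its left it moves `i` to the left and lowers `∑ c · (n - T(r, c))`.
Minimizing these potentials over a class therefore yields a sink and a source.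
-/

theorem exists_eq_and_of_forall_not_imp_exists_lt {X β : Type*} (k : X → β) (f : X → ℕ)
    {P : X → Prop} (step : ∀ x, ¬ P x → ∃ y, k y = k x ∧ f y < f x) (x : X) :
    ∃ y, k y = k x ∧ P y := by
  obtain ⟨y, hy, hmin⟩ := (InvImage.wf f wellFounded_lt).has_min {y | k y = k x} ⟨x, rfl⟩
  refine ⟨y, hy, by_contra fun hP => ?_⟩
  obtain ⟨z, hz, hlt⟩ := step y hP
  exact hmin z (hz.trans hy) hlt

lemma Equiv.swap_add_one_lt_swap_add_one_iff {i x y : ℕ} (h : ¬ (x = i ∧ y = i + 1))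
    (h' : ¬ (x = i + 1 ∧ y = i)) :
    Equiv.swap i (i + 1) x < Equiv.swap i (i + 1) y ↔ x < y := by
  simp only [Equiv.swap_apply_def]
  split_ifs <;> omega

lemma stdWord_map {f : ℕ → ℕ} {w : List ℕ} (hf : ∀ x ∈ w, ∀ y ∈ w, f y ≤ f x ↔ y ≤ x) :
    stdWord (w.map f) = stdWord w := by
  unfold stdWord
  rw [List.map_map]
  refine List.map_congr_left fun x hx => ?_
  rw [Function.comp_apply, List.filter_map, List.length_map]
  exact congrArg List.length
    (List.filter_congr fun y hy => decide_eq_decide.mpr (hf x hx y hy))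

/-- The row, first-column and triple conditions never compare the entries of two cells in this
relative position, so exchanging consecutive values there preserves them. -/
def Separated (r c r' c' : ℕ) : Prop :=
  c ≠ c' ∧ (c' = c + 1 → r' < r) ∧ (c = c' + 1 → r < r')

lemma Separated.symm {r c r' c' : ℕ} (h : Separated r c r' c') : Separated r' c' r c :=
  ⟨h.1.symm, h.2.2, h.2.1⟩

def cells (α : List ℕ) : Finset (ℕ × ℕ) :=
  (Finset.range α.length ×ˢ Finset.range α.sum).filter fun p => IsCell α p.1 p.2

lemma mem_cells {α : List ℕ} {p : ℕ × ℕ} : p ∈ cells α ↔ IsCell α p.1 p.2 := by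
  refine ⟨fun h => (Finset.mem_filter.mp h).2, fun h => Finset.mem_filter.mpr ⟨?_, h⟩⟩
  have hrow : α.getD p.1 0 ≤ α.sum := by
    rw [List.getD_eq_getElem α 0 h.1]
    exact List.le_sum_of_mem (List.getElem_mem _)
  exact Finset.mem_product.mpr ⟨Finset.mem_range.mpr h.1, Finset.mem_range.mpr (by
    have := h.2; omega)⟩

namespace SRCT

variable {α : List ℕ}

def colWeight (T : SRCT α) (w : ℕ → ℕ) : ℕ := ∑ p ∈ cells α, p.2 * w (T.entry p.1 p.2)

def SwapAdmissible (T : SRCT α) (i : ℕ) : Prop :=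
  1 ≤ i ∧ i < α.sum ∧ ∀ r c r' c', IsCell α r c → IsCell α r' c' →
    T.entry r c = i → T.entry r' c' = i + 1 → Separated r c r' c'

lemma swapAdmissible_of_cells (T : SRCT α) {i r c r' c' : ℕ} (hP : IsCell α r c)
    (hQ : IsCell α r' c') (eP : T.entry r c = i) (eQ : T.entry r' c' = i + 1)
    (hsep : Separated r c r' c') : T.SwapAdmissible i := by
  refine ⟨eP ▸ T.one_le r c hP, by have := T.le_sum r' c' hQ; omega, ?_⟩
  intro ra ca rb cb ha hb ea eb
  obtain ⟨rfl, rfl⟩ := T.inj _ _ _ _ ha hP (ea.trans eP.symm)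
  obtain ⟨rfl, rfl⟩ := T.inj _ _ _ _ hb hQ (eb.trans eQ.symm)
  exact hsep

lemma swap_entry_lt_swap_entry_iff (T : SRCT α) {i ra ca rb cb : ℕ} (h : T.SwapAdmissible i)
    (ha : IsCell α ra ca) (hb : IsCell α rb cb) (hns : ¬ Separated ra ca rb cb) :
    Equiv.swap i (i + 1) (T.entry ra ca) < Equiv.swap i (i + 1) (T.entry rb cb) ↔
      T.entry ra ca < T.entry rb cb :=
  Equiv.swap_add_one_lt_swap_add_one_iff (fun ⟨ea, eb⟩ => hns (h.2.2 _ _ _ _ ha hb ea eb))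
    (fun ⟨ea, eb⟩ => hns (h.2.2 _ _ _ _ hb ha eb ea).symm)

lemma swapEntry_eq (T : SRCT α) (i r c : ℕ) :
    swapEntry α T i r c = Equiv.swap i (i + 1) (T.entry r c) :=
  (Equiv.swap_apply_def _ _ _).symm

def swap (T : SRCT α) (i : ℕ) (h : T.SwapAdmissible i) : SRCT α where
  entry := swapEntry α T i
  zero_off r c hc := by
    have := h.1
    rw [swapEntry_eq, T.zero_off r c hc, Equiv.swap_apply_of_ne_of_ne] <;> omega
  one_le r c hc := by
    have := T.one_le r c hc
    have := h.1
    rw [swapEntry_eq, Equiv.swap_apply_def]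
    split_ifs <;> omega
  le_sum r c hc := by
    have := T.le_sum r c hc
    have := h.2.1
    rw [swapEntry_eq, Equiv.swap_apply_def]
    split_ifs <;> omega
  inj r c r' c' hc hc' he := by
    simp only [swapEntry_eq] at he
    exact T.inj r c r' c' hc hc' ((Equiv.swap i (i + 1)).injective he)
  surj m h1 h2 := by
    have hm : 1 ≤ Equiv.swap i (i + 1) m ∧ Equiv.swap i (i + 1) m ≤ α.sum := by
      have := h.1
      have := h.2.1
      rw [Equiv.swap_apply_def]
      split_ifs <;> omega
    obtain ⟨r, c, hc, he⟩ := T.surj _ hm.1 hm.2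
    exact ⟨r, c, hc, by rw [swapEntry_eq, he, Equiv.swap_apply_self]⟩
  row_dec r c hc := by
    have hc' : IsCell α r c := ⟨hc.1, by have := hc.2; omega⟩
    simp only [swapEntry_eq]
    exact (T.swap_entry_lt_swap_entry_iff h hc hc' (by unfold Separated; omega)).mpr
      (T.row_dec r c hc)
  col1_inc r r' hr hc hc' := by
    simp only [swapEntry_eq]
    exact (T.swap_entry_lt_swap_entry_iff h hc hc' (by unfold Separated; omega)).mpr
      (T.col1_inc r r' hr hc hc')
  triple r r' c hr hc hc' hlt := by
    simp only [swapEntry_eq] at hlt ⊢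
    rw [T.swap_entry_lt_swap_entry_iff h hc' hc (by unfold Separated; omega)] at hlt
    obtain ⟨hcell, hlt'⟩ := T.triple r r' c hr hc hc' hlt
    exact ⟨hcell, (T.swap_entry_lt_swap_entry_iff h hc' hcell (by unfold Separated; omega)).mpr
      hlt'⟩

lemma colList_swap (T : SRCT α) {i : ℕ} (h : T.SwapAdmissible i) (c : ℕ) :
    colList α (T.swap i h) c = (colList α T c).map (Equiv.swap i (i + 1)) := by
  unfold colList
  rw [List.map_filterMap]
  refine List.filterMap_congr fun r _ => ?_
  by_cases hc : IsCell α r c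
  · simp [hc, swap, swapEntry_eq]
  · simp [hc]

lemma mem_colList {T : SRCT α} {c x : ℕ} :
    x ∈ colList α T c ↔ ∃ r, IsCell α r c ∧ T.entry r c = x := by
  simp only [colList, List.mem_filterMap, List.mem_range, Option.ite_none_right_eq_some,
    Option.some.injEq]
  exact ⟨fun ⟨r, _, hc, he⟩ => ⟨r, hc, he⟩, fun ⟨r, hc, he⟩ => ⟨r, hc.1, hc, he⟩⟩

lemma stWord_swap (T : SRCT α) {i : ℕ} (h : T.SwapAdmissible i) :
    stWord α (T.swap i h) = stWord α T := by
  unfold stWord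
  congr 1
  funext c
  rw [colList_swap, stdWord_map]
  intro x hx y hy
  obtain ⟨r, hr, rfl⟩ := mem_colList.mp hx
  obtain ⟨r', hr', rfl⟩ := mem_colList.mp hy
  rw [← not_lt, ← not_lt,
    T.swap_entry_lt_swap_entry_iff h hr hr' (by unfold Separated; omega)]

lemma colWeight_swap (T : SRCT α) {i r c r' c' : ℕ} (h : T.SwapAdmissible i)
    (hP : IsCell α r c) (hQ : IsCell α r' c') (eP : T.entry r c = i)
    (eQ : T.entry r' c' = i + 1) (w : ℕ → ℕ) :
    ((T.swap i h).colWeight w : ℤ) = T.colWeight w + ((c : ℤ) - c') * (w (i + 1) - w i) := by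
  have hPQ : (r, c) ≠ (r', c') := fun he => by
    simp only [Prod.mk.injEq] at he
    obtain ⟨rfl, rfl⟩ := he
    omega
  have hdiff : ((T.swap i h).colWeight w : ℤ) - T.colWeight w =
      ∑ p ∈ cells α, (p.2 : ℤ) *
        (w (Equiv.swap i (i + 1) (T.entry p.1 p.2)) - w (T.entry p.1 p.2)) := by
    simp only [colWeight, swap, swapEntry_eq, Nat.cast_sum, Nat.cast_mul,
      ← Finset.sum_sub_distrib, mul_sub]
  rw [Finset.sum_eq_add_of_mem (r, c) (r', c') (mem_cells.mpr hP) (mem_cells.mpr hQ) hPQ]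
    at hdiff
  · simp only [eP, eQ, Equiv.swap_apply_left, Equiv.swap_apply_right] at hdiff
    linear_combination hdiff
  · rintro ⟨ra, ca⟩ hp ⟨hne, hne'⟩
    have hp := mem_cells.mp hp
    rw [Equiv.swap_apply_of_ne_of_ne, sub_self, mul_zero]
    · exact fun he => hne (by obtain ⟨rfl, rfl⟩ := T.inj _ _ _ _ hp hP (he.trans eP.symm); rfl)
    · exact fun he => hne' (by obtain ⟨rfl, rfl⟩ := T.inj _ _ _ _ hp hQ (he.trans eQ.symm); rfl)

lemma separated_of_descent_of_not_attacking (T : SRCT α) {i r c r' c' : ℕ}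
    (hP : IsCell α r c) (hQ : IsCell α r' c') (eP : T.entry r c = i)
    (eQ : T.entry r' c' = i + 1) (hle : c ≤ c') (hna : ¬ Attacking α T i) :
    Separated r c r' c' := by
  have hrow : ¬ (r = r' ∧ c' = c + 1) := by
    rintro ⟨rfl, rfl⟩
    have := T.row_dec r c hQ
    omega
  refine ⟨fun he => hna ⟨r, c, r', c', hP, hQ, eP, eQ, Or.inl he.symm⟩, fun hc => ?_,
    by omega⟩
  by_contra! hr
  exact hna ⟨r, c, r', c', hP, hQ, eP, eQ, Or.inr ⟨hc, by omega⟩⟩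

lemma separated_of_not_descent (T : SRCT α) {i r c r' c' : ℕ}
    (hP : IsCell α r c) (hQ : IsCell α r' c') (eP : T.entry r c = i)
    (eQ : T.entry r' c' = i + 1) (hnd : ¬ Descent α T i) (hnl : ¬ (r = r' ∧ c = c' + 1)) :
    Separated r c r' c' := by
  have hlt : c' < c := lt_of_not_ge fun hle => hnd ⟨r, c, r', c', hP, hQ, eP, eQ, hle⟩
  refine ⟨by omega, by omega, fun hc => lt_of_not_ge fun hle => ?_⟩
  subst hc
  have hr : r' < r := lt_of_le_of_ne hle fun he => hnl ⟨he.symm, rfl⟩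
  -- the triple rule puts an entry strictly between `i` and `i + 1` right of `i + 1`
  obtain ⟨hcell, hgt⟩ := T.triple r' r c' hr hQ hP (by omega)
  have := T.row_dec r' c' hcell
  omega

lemma exists_sink_step (T : SRCT α) (h : ¬ IsSink α T) :
    ∃ T' : SRCT α, stWord α T' = stWord α T ∧ T'.colWeight id < T.colWeight id := by
  simp only [IsSink, not_forall] at h
  obtain ⟨i, ⟨r, c, r', c', hP, hQ, eP, eQ, hle⟩, hna⟩ := h
  have hsep := T.separated_of_descent_of_not_attacking hP hQ eP eQ hle hna
  have hadm := T.swapAdmissible_of_cells hP hQ eP eQ hsep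
  refine ⟨T.swap i hadm, T.stWord_swap hadm, ?_⟩
  have hw := T.colWeight_swap hadm hP hQ eP eQ id
  have hc : c < c' := lt_of_le_of_ne hle hsep.1
  rw [id, id, Nat.cast_succ, add_sub_cancel_left, mul_one] at hw
  omega

lemma exists_source_step (T : SRCT α) (h : ¬ IsSource α T) :
    ∃ T' : SRCT α, stWord α T' = stWord α T ∧
      T'.colWeight (α.sum - ·) < T.colWeight (α.sum - ·) := by
  simp only [IsSource, not_forall, not_exists, not_and] at h
  obtain ⟨i, hi, hin, hnd, hnl⟩ := h
  obtain ⟨r, c, hP, eP⟩ := T.surj i hi hin.le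
  obtain ⟨r', c', hQ, eQ⟩ := T.surj (i + 1) (by omega) hin
  have hsep := T.separated_of_not_descent hP hQ eP eQ hnd fun ⟨hr, hc⟩ =>
    hnl r' c' (hc ▸ hr ▸ hP) eQ (hc ▸ hr ▸ eP)
  have hadm := T.swapAdmissible_of_cells hP hQ eP eQ hsep
  refine ⟨T.swap i hadm, T.stWord_swap hadm, ?_⟩
  have hw := T.colWeight_swap hadm hP hQ eP eQ (α.sum - ·)
  have hc : c' < c := lt_of_not_ge fun hle => hnd ⟨r, c, r', c', hP, hQ, eP, eQ, hle⟩
  have hdec : ((α.sum - (i + 1) : ℕ) : ℤ) - (α.sum - i : ℕ) = -1 := by omega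
  rw [hdec, mul_neg_one] at hw
  omega

end SRCT

theorem class_has_source_and_sink_general (α : List ℕ) (T : SRCT α) :
    (∃ Ts ∈ stClass α T, IsSource α Ts) ∧ (∃ Tk ∈ stClass α T, IsSink α Tk) :=
  ⟨exists_eq_and_of_forall_not_imp_exists_lt (stWord α) (·.colWeight (α.sum - ·))
      SRCT.exists_source_step T,
    exists_eq_and_of_forall_not_imp_exists_lt (stWord α) (·.colWeight id)
      SRCT.exists_sink_step T⟩

/-- Every `∼_α`-equivalence class contains at least one source tableau and at least one
sink tableau. -/
theorem class_has_source_and_sink (n : ℕ) (α : List ℕ) (hpos : ∀ a ∈ α, 0 < a)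
    (hsum : α.sum = n) (T : SRCT α) :
    (∃ Ts ∈ stClass α T, IsSource α Ts) ∧ (∃ Tk ∈ stClass α T, IsSink α Tk) :=
  class_has_source_and_sink_general α T
end

section
/- Let α ⊨ n, let E be an equivalence class of SRCT(α) under ∼_α, let τ_source be a source tableau in E, and let m be the smallest element of DRN(α,E). Then the distinguished removable node in column m of τ_source contains the entry 1. -/
/-- The cell `(r,c)` is a removable node of the diagram of `α` (0-indexed): it is the last
cell of row `r`, and either `r` is the top row or no earlier part equals `α_r - 1`
(with `α_r ≥ 2`). -/
def Removable (α : List ℕ) (r c : ℕ) : Prop :=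
  IsCell α r c ∧ c + 1 = α.getD r 0 ∧
    (r = 0 ∨ (2 ≤ α.getD r 0 ∧ ∀ i < r, α.getD i 0 ≠ α.getD r 0 - 1))

/-- The cell `(r,c)` of `T` contains the smallest entry in its column. -/
def MinInCol (α : List ℕ) (T : SRCT α) (r c : ℕ) : Prop :=
  ∀ r', IsCell α r' c → T.entry r c ≤ T.entry r' c

/-- The set of columns containing a distinguished removable node (a removable node holding
the smallest entry of its column); this depends only on the `∼_α`-class of `T`. -/
def DRN (α : List ℕ) (T : SRCT α) : Set ℕ :=
  {c | ∃ r, Removable α r c ∧ MinInCol α T r c}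

/-! The class determines `DRN`, because the standardized word of a column records which of its
cells holds the column minimum. In any SRCT the entry `1` ends its row and, by the triple rule,
sits in a removable node, so its column belongs to `DRN` and is at least `m`. In a source
tableau each `j` lies weakly left of `j + 1` or immediately right of it in the same row. Starting
from the entry `e` of the distinguished node in column `m`, which ends its row and is least in
its column, downward induction therefore puts every `j < e` strictly left of column `m`; for
`j = 1` this is impossible, so `e = 1`. -/

theorem List.length_filter_le_le_length_filter_le_iff {w : List ℕ} {x y : ℕ} (hx : x ∈ w) :
    (w.filter fun z => decide (z ≤ x)).length ≤ (w.filter fun z => decide (z ≤ y)).length ↔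
      x ≤ y := by
  refine ⟨fun h => ?_, fun h => ?_⟩
  · by_contra! hyx
    have hsub : (w.filter fun z => decide (z ≤ y)) =
        (w.filter fun z => decide (z ≤ x)).filter fun z => decide (z ≤ y) := by
      rw [List.filter_filter]
      exact List.filter_congr fun z _ => by grind
    have hlt : ((w.filter fun z => decide (z ≤ x)).filter fun z => decide (z ≤ y)).length <
        (w.filter fun z => decide (z ≤ x)).length :=
      List.length_filter_lt_length_iff_exists.mpr ⟨x, by simpa using hx, by simpa using hyx⟩
    rw [hsub] at h
    omega
  · simp only [← List.countP_eq_length_filter]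
    exact List.countP_mono_left fun z _ hz => by grind

theorem stdWord_map_le_iff {ι : Type*} {l : List ι} {f g : ι → ℕ}
    (h : stdWord (l.map f) = stdWord (l.map g)) {a b : ι} (ha : a ∈ l) (hb : b ∈ l) :
    f a ≤ f b ↔ g a ≤ g b := by
  simp only [stdWord, List.map_map, List.map_inj_left, Function.comp_apply] at h
  rw [← List.length_filter_le_le_length_filter_le_iff (List.mem_map_of_mem ha),
    ← List.length_filter_le_le_length_filter_le_iff (List.mem_map_of_mem ha), h a ha, h b hb]

theorem List.eq_of_flatMap_eq {ι κ : Type*} {l : List ι} {f g : ι → List κ}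
    (h : l.flatMap f = l.flatMap g) (hlen : ∀ a ∈ l, (f a).length = (g a).length) :
    ∀ a ∈ l, f a = g a := by
  induction l with
  | nil => simp
  | cons a l ih =>
    rw [List.flatMap_cons, List.flatMap_cons] at h
    obtain ⟨hhead, htail⟩ := List.append_inj h (hlen a List.mem_cons_self)
    simpa [hhead] using ih htail fun b hb => hlen b (List.mem_cons_of_mem a hb)

theorem getD_le_maxPart (α : List ℕ) (r : ℕ) : α.getD r 0 ≤ maxPart α := by
  rcases lt_or_ge r α.length with hr | hr
  · rw [List.getD_eq_getElem α 0 hr]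
    exact List.le_max_of_le (List.getElem_mem hr) le_rfl
  · rw [List.getD_eq_default α 0 hr]
    exact Nat.zero_le _

def colRows (α : List ℕ) (c : ℕ) : List ℕ :=
  (List.range α.length).filter fun r => decide (IsCell α r c)

theorem mem_colRows {α : List ℕ} {r c : ℕ} : r ∈ colRows α c ↔ IsCell α r c := by
  simpa [colRows] using fun h => h.1

theorem colList_eq_map (α : List ℕ) (T : SRCT α) (c : ℕ) :
    colList α T c = (colRows α c).map fun r => T.entry r c := by
  unfold colList colRows
  induction List.range α.length with
  | nil => rfl
  | cons a l ih => by_cases h : IsCell α a c <;> simp [h, ih]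

theorem stdWord_colList_eq_of_stWord_eq {α : List ℕ} {T T' : SRCT α}
    (h : stWord α T = stWord α T') {c : ℕ} (hc : c < maxPart α) :
    stdWord (colList α T c) = stdWord (colList α T' c) :=
  List.eq_of_flatMap_eq h (fun c _ => by simp [stdWord, colList_eq_map]) c
    (List.mem_range.mpr hc)

theorem minInCol_iff_of_stWord_eq {α : List ℕ} {T T' : SRCT α}
    (h : stWord α T = stWord α T') {r c : ℕ} (hrc : IsCell α r c) :
    MinInCol α T r c ↔ MinInCol α T' r c := by
  have hcol := stdWord_colList_eq_of_stWord_eq h (hrc.2.trans_le (getD_le_maxPart α r))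
  rw [colList_eq_map, colList_eq_map] at hcol
  exact forall_congr' fun r' => imp_congr_right fun hr' =>
    stdWord_map_le_iff hcol (mem_colRows.mpr hrc) (mem_colRows.mpr hr')

theorem DRN_eq_of_stWord_eq {α : List ℕ} {T T' : SRCT α} (h : stWord α T = stWord α T') :
    DRN α T = DRN α T' := by
  ext c
  exact exists_congr fun r => and_congr_right fun hrem => minInCol_iff_of_stWord_eq h hrem.1

namespace SRCT

variable {α : List ℕ} (T : SRCT α)

theorem succ_eq_getD_of_entry_eq_one {r c : ℕ} (hrc : IsCell α r c) (h1 : T.entry r c = 1) :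
    c + 1 = α.getD r 0 := by
  by_contra hne
  have hnext : IsCell α r (c + 1) := ⟨hrc.1, by have := hrc.2; omega⟩
  have := T.row_dec r c hnext
  have := T.one_le r (c + 1) hnext
  omega

theorem one_lt_entry_of_entry_eq_one {r c r' c' : ℕ} (hrc : IsCell α r c)
    (h1 : T.entry r c = 1) (hrc' : IsCell α r' c') (hne : r' ≠ r ∨ c' ≠ c) :
    1 < T.entry r' c' := by
  have := T.one_le r' c' hrc'
  by_contra hle
  have := T.inj r' c' r c hrc' hrc (by omega)
  tauto

theorem getD_ne_of_entry_eq_one {r c i : ℕ} (hrc : IsCell α r c) (h1 : T.entry r c = 1)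
    (hc : 0 < c) (hi : i < r) : α.getD i 0 ≠ c := by
  intro hlen
  have hleft : IsCell α i (c - 1) := ⟨hi.trans hrc.1, by omega⟩
  have hc' : c - 1 + 1 = c := by omega
  -- the triple rule at the cell left of the end of row `i` would force row `i` to reach column `c`
  have htriple := T.triple i r (c - 1) hi hleft (hc' ▸ hrc) (by
    rw [hc', h1]
    exact T.one_lt_entry_of_entry_eq_one hrc h1 hleft (Or.inl hi.ne))
  have := htriple.1.2
  omega

theorem removable_of_entry_eq_one (hpos : ∀ a ∈ α, 0 < a) {r c : ℕ} (hrc : IsCell α r c)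
    (h1 : T.entry r c = 1) : Removable α r c := by
  have hend := T.succ_eq_getD_of_entry_eq_one hrc h1
  refine ⟨hrc, hend, or_iff_not_imp_left.mpr fun hr => ?_⟩
  have htop : IsCell α 0 0 := by
    have hlen : 0 < α.length := hrc.1.trans_le' (Nat.zero_le r)
    exact ⟨hlen, List.getD_eq_getElem α 0 hlen ▸ hpos _ (List.getElem_mem hlen)⟩
  have hc : 0 < c := by
    by_contra hc0
    obtain rfl : c = 0 := by omega
    have := T.col1_inc 0 r (Nat.pos_of_ne_zero hr) htop hrc
    have := T.one_le 0 0 htop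
    omega
  exact ⟨by omega, fun i hi => by
    rw [← hend, Nat.add_sub_cancel]; exact T.getD_ne_of_entry_eq_one hrc h1 hc hi⟩

theorem mem_DRN_of_entry_eq_one (hpos : ∀ a ∈ α, 0 < a) {r c : ℕ} (hrc : IsCell α r c)
    (h1 : T.entry r c = 1) : c ∈ DRN α T :=
  ⟨r, T.removable_of_entry_eq_one hpos hrc h1, fun r' hr' => h1 ▸ T.one_le r' c hr'⟩

end SRCT

namespace IsSource

variable {α : List ℕ} {T : SRCT α}

theorem col_le_or_eq_succ (hT : IsSource α T) {a b a' b' : ℕ} (hab : IsCell α a b)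
    (hab' : IsCell α a' b') (hsucc : T.entry a' b' = T.entry a b + 1) :
    b ≤ b' ∨ (a = a' ∧ b = b' + 1) := by
  by_cases hdes : Descent α T (T.entry a b)
  · obtain ⟨p, q, p', q', hpq, hpq', hj, hj', hle⟩ := hdes
    obtain ⟨-, rfl⟩ := T.inj p q a b hpq hab hj
    obtain ⟨-, rfl⟩ := T.inj p' q' a' b' hpq' hab' (hj'.trans hsucc.symm)
    exact Or.inl hle
  · have hlt : T.entry a b < α.sum := by have := T.le_sum a' b' hab'; omega
    obtain ⟨p, q, hpq, hj', hj⟩ := hT _ (T.one_le a b hab) hlt hdes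
    obtain ⟨rfl, rfl⟩ := T.inj p (q + 1) a b hpq hab hj
    obtain ⟨rfl, rfl⟩ := T.inj p q a' b' ⟨hpq.1, by have := hpq.2; omega⟩ hab' (hj'.trans hsucc.symm)
    exact Or.inr ⟨rfl, rfl⟩

theorem col_lt_of_entry_lt (hT : IsSource α T) {r m : ℕ} (hrm : IsCell α r m)
    (hend : m + 1 = α.getD r 0) (hmin : MinInCol α T r m) {a b : ℕ} (hab : IsCell α a b)
    (hlt : T.entry a b < T.entry r m) : b < m := by
  suffices key : ∀ j (_ : j ≤ T.entry r m), ∀ a b, IsCell α a b → T.entry a b = j →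
      b < m ∨ (a = r ∧ b = m) by
    rcases key _ hlt.le a b hab rfl with hb | ⟨rfl, rfl⟩
    · exact hb
    · exact absurd hlt (lt_irrefl _)
  intro j hj
  refine Nat.decreasingInduction (fun j hj ih a b hab hja => ?_)
    (fun a b hab hj => Or.inr (T.inj a b r m hab hrm hj)) hj
  have hbm : b ≠ m := by
    rintro rfl
    have := hmin a hab
    omega
  obtain ⟨a', b', hab', hja'⟩ := T.surj (j + 1) (Nat.le_add_left 1 j)
    (hj.trans_le (T.le_sum r m hrm))
  have hadj := hT.col_le_or_eq_succ hab hab' (by rw [hja', hja])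
  rcases ih a' b' hab' hja' with hb' | ⟨rfl, rfl⟩
  · omega
  · rcases hadj with hle | ⟨rfl, rfl⟩
    · omega
    · have := hab.2
      omega

end IsSource

theorem source_one_in_least_DRN_column_general (α : List ℕ) (hpos : ∀ a ∈ α, 0 < a)
    (T Tsrc : SRCT α) (hcl : Tsrc ∈ stClass α T)
    (hsrc : IsSource α Tsrc) (m : ℕ) (hm : IsLeast (DRN α T) m) :
    ∃ r, Removable α r m ∧ MinInCol α Tsrc r m ∧ Tsrc.entry r m = 1 := by
  have hDRN : DRN α Tsrc = DRN α T := DRN_eq_of_stWord_eq hcl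
  obtain ⟨r, hrem, hmin⟩ : m ∈ DRN α Tsrc := hDRN ▸ hm.1
  refine ⟨r, hrem, hmin, ?_⟩
  have hpos_rm := Tsrc.one_le r m hrem.1
  obtain ⟨r₁, c₁, hc₁, h₁⟩ := Tsrc.surj 1 le_rfl (hpos_rm.trans (Tsrc.le_sum r m hrem.1))
  have hm_le : m ≤ c₁ := hm.2 (hDRN ▸ Tsrc.mem_DRN_of_entry_eq_one hpos hc₁ h₁)
  by_contra hne
  have := hsrc.col_lt_of_entry_lt hrem.1 hrem.2.1 hmin hc₁ (by omega)
  omega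

/-- In a source tableau of an equivalence class `E`, the distinguished removable node in the
smallest column of `DRN(α,E)` contains the entry `1`. -/
theorem source_one_in_least_DRN_column (n : ℕ) (α : List ℕ) (hpos : ∀ a ∈ α, 0 < a)
    (hsum : α.sum = n) (T Tsrc : SRCT α) (hcl : Tsrc ∈ stClass α T)
    (hsrc : IsSource α Tsrc) (m : ℕ) (hm : IsLeast (DRN α T) m) :
    ∃ r, Removable α r m ∧ MinInCol α Tsrc r m ∧ Tsrc.entry r m = 1 :=
  source_one_in_least_DRN_column_general α hpos T Tsrc hcl hsrc m hm
end

section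
/- Let α = (α_1,…,α_ℓ) be a simple composition. Then the part α_j (1 ≤ j ≤ ℓ) has a removable node if and only if either j = 1, or α_i ≤ α_j − 2 for all 1 ≤ i < j. -/
/-- A composition is simple if whenever `α_i ≥ α_j ≥ 2` with `i < j` there is `i < k < j`
with `α_k = α_j - 1` (0-indexed parts). -/
def SimpleComp (α : List ℕ) : Prop :=
  ∀ i j, i < j → j < α.length → 2 ≤ α.getD j 0 → α.getD j 0 ≤ α.getD i 0 →
    ∃ k, i < k ∧ k < j ∧ α.getD k 0 = α.getD j 0 - 1

/-- The part of `α` with (0-indexed) index `j` has a removable node. -/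
def HasRemovable (α : List ℕ) (j : ℕ) : Prop :=
  j < α.length ∧ (j = 0 ∨ (2 ≤ α.getD j 0 ∧ ∀ i < j, α.getD i 0 ≠ α.getD j 0 - 1))

/-- In a simple composition, part `α_j` has a removable node iff `j` is the first part or all
earlier parts satisfy `α_i ≤ α_j - 2`. -/
theorem simple_removable_iff (α : List ℕ) (hpos : ∀ a ∈ α, 0 < a) (hs : SimpleComp α)
    (j : ℕ) (hj : j < α.length) :
    HasRemovable α j ↔ (j = 0 ∨ ∀ i < j, α.getD i 0 + 2 ≤ α.getD j 0) := by
  constructor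
  · rintro ⟨-, h | ⟨h2, hne⟩⟩
    · exact Or.inl h
    · right
      intro i hi
      by_contra hlt
      push_neg at hlt
      have hne' := hne i hi
      have hij : α.getD j 0 ≤ α.getD i 0 := by omega
      obtain ⟨k, hik, hkj, hk⟩ := hs i j hi hj h2 hij
      exact hne k hkj hk
  · rintro (h | h)
    · exact ⟨hj, Or.inl h⟩
    · by_cases hj0 : j = 0
      · exact ⟨hj, Or.inl hj0⟩
      · have h0 := h 0 (Nat.pos_of_ne_zero hj0)
        have hmem : α.getD 0 0 ∈ α := by
          rw [List.getD_eq_getElem α 0 (by omega)]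
          exact List.getElem_mem _
        have hp := hpos _ hmem
        refine ⟨hj, Or.inr ⟨by omega, fun i hi => ?_⟩⟩
        have := h i hi
        omega
end

section
/- Let α = (α_1,…,α_ℓ) be a simple composition and suppose the part α_j has a removable node. Then the composition obtained from α by replacing α_j with α_j − 1 (deleting this part if it becomes 0) is also a simple composition. -/
/-- Removing a removable node from a simple composition yields a simple composition. -/
theorem simple_remove_node (α : List ℕ) (hpos : ∀ a ∈ α, 0 < a) (hs : SimpleComp α)
    (j : ℕ) (hj : HasRemovable α j) :
    SimpleComp (if α.getD j 0 = 1 then α.eraseIdx j else α.set j (α.getD j 0 - 1)) := by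
  obtain ⟨hjlen, hrem0⟩ := hj
  by_cases h1 : α.getD j 0 = 1
  · -- erase case: j must be 0
    have hj0 : j = 0 := by
      rcases hrem0 with h | ⟨h2, _⟩
      · exact h
      · omega
    subst hj0
    simp only [if_pos h1]
    obtain ⟨a, t, rfl⟩ : ∃ a t, α = a :: t := by
      cases α with
      | nil => simp at hjlen
      | cons a t => exact ⟨a, t, rfl⟩
    simp only [List.eraseIdx_cons_zero]
    intro i j' hij hj'len h2 hle
    have hget : ∀ k, t.getD k 0 = (a :: t).getD (k+1) 0 := fun k => rfl
    obtain ⟨k, hik, hkj, hk⟩ := hs (i+1) (j'+1) (by omega)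
      (by simpa using Nat.succ_lt_succ hj'len) (by rwa [← hget]) (by rwa [← hget, ← hget])
    refine ⟨k - 1, by omega, by omega, ?_⟩
    have hk1 : k - 1 + 1 = k := by omega
    rw [hget (k-1), hk1, hk, ← hget]
  · -- set case
    simp only [if_neg h1]
    have hmem : α.getD j 0 ∈ α := by
      rw [List.getD_eq_getElem?_getD, List.getElem?_eq_getElem hjlen]
      exact List.getElem_mem hjlen
    have hm2 : 2 ≤ α.getD j 0 := by have := hpos _ hmem; omega
    have hrem : ∀ i < j, α.getD i 0 ≠ α.getD j 0 - 1 := by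
      rcases hrem0 with h | ⟨_, h⟩
      · intro i hi; omega
      · exact h
    set m := α.getD j 0 with hm
    have hgeq : (α.set j (m-1)).getD j 0 = m - 1 := by
      simp [List.getD_eq_getElem?_getD, List.getElem?_set, hjlen]
    have hgne : ∀ k, k ≠ j → (α.set j (m-1)).getD k 0 = α.getD k 0 := by
      intro k hk
      simp [List.getD_eq_getElem?_getD, List.getElem?_set, Ne.symm hk]
    intro i j' hij hj'len h2 hle
    rw [List.length_set] at hj'len
    by_cases hj'j : j' = j
    · -- impossible: would give a part equal to m-1 before j
      exfalso
      rw [hj'j, hgeq] at h2 hle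
      rw [hgne i (by omega)] at hle
      have hij2 : α.getD i 0 ≠ m - 1 := hrem i (hj'j ▸ hij)
      have : m ≤ α.getD i 0 := by omega
      obtain ⟨k, hik, hkj, hk⟩ := hs i j (hj'j ▸ hij) hjlen hm2 this
      exact hrem k hkj hk
    · by_cases hijeq : i = j
      · rw [hijeq, hgeq] at hle
        rw [hgne j' hj'j] at h2 hle ⊢
        obtain ⟨k, hik, hkj, hk⟩ := hs i j' hij hj'len h2 (by rw [hijeq]; omega)
        refine ⟨k, hik, hkj, ?_⟩
        rw [hgne k (by omega)]
        exact hk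
      · rw [hgne i hijeq] at hle
        rw [hgne j' hj'j] at h2 hle ⊢
        obtain ⟨k, hik, hkj, hk⟩ := hs i j' hij hj'len h2 hle
        by_cases hkj' : k = j
        · exfalso
          rw [hkj'] at hik hk
          -- α_{j'} = m + 1, so α_i ≥ m+1 ≥ m; simple gives part m-1 before j
          rw [← hm] at hk
          have hj'm : α.getD j' 0 = m + 1 := by omega
          have : m ≤ α.getD i 0 := by omega
          obtain ⟨k₁, hik₁, hk₁j, hk₁⟩ := hs i j hik hjlen hm2 this
          exact hrem k₁ hk₁j hk₁
        · exact ⟨k, hik, hkj, by rw [hgne k hkj']; exact hk⟩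
end

section
/- Let α ⊨ n be a simple composition. Then for every τ ∈ SRCT(α), the entries in each column of τ increase from top to bottom. -/
/-- The entries in every column of `T` increase from top to bottom. -/
def ColIncreasing (α : List ℕ) (T : SRCT α) : Prop :=
  ∀ r r' c, r < r' → IsCell α r c → IsCell α r' c → T.entry r c < T.entry r' c

/-- No column violation whose lower cell is the last cell of its row. -/
lemma aux_last (α : List ℕ) (hs : SimpleComp α) (T : SRCT α) :
    ∀ c r ρ, r < ρ → IsCell α r c → IsCell α ρ c → α.getD ρ 0 = c + 1 →
      T.entry ρ c < T.entry r c → False := by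
  intro c
  induction c with
  | zero =>
    intro r ρ hrρ hr hρ _ hlt
    exact absurd (T.col1_inc r ρ hrρ hr hρ) (by omega)
  | succ c ih =>
    intro r ρ hrρ hr hρ hα hlt
    obtain ⟨k, hk1, hk2, hαk⟩ := hs r ρ hrρ hρ.1 (by omega) (by have := hr.2; omega)
    have hαk' : α.getD k 0 = c + 1 := by omega
    have hkc : IsCell α k c := ⟨lt_trans hk2 hρ.1, by omega⟩
    have hrc : IsCell α r c := ⟨hr.1, by have := hr.2; omega⟩
    rcases lt_trichotomy (T.entry k c) (T.entry ρ (c+1)) with h | h | h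
    · have hrowr := T.row_dec r c hr
      exact ih r k hk1 hrc hkc hαk' (by omega)
    · exact absurd ((T.inj k c ρ (c+1) hkc hρ h).2) (by omega)
    · obtain ⟨hcell, -⟩ := T.triple k ρ c hk2 hkc hρ h
      exact absurd hcell.2 (by omega)

/-- No column violation at all: push the violation rightwards to the end of the lower row. -/
lemma aux_push (α : List ℕ) (hs : SimpleComp α) (T : SRCT α) :
    ∀ d c r ρ, α.getD ρ 0 ≤ c + 1 + d → r < ρ → IsCell α r c → IsCell α ρ c →
      T.entry ρ c < T.entry r c → False := by
  intro d
  induction d with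
  | zero =>
    intro c r ρ hd hrρ hr hρ hlt
    exact aux_last α hs T c r ρ hrρ hr hρ (by have := hρ.2; omega) hlt
  | succ d ih =>
    intro c r ρ hd hrρ hr hρ hlt
    by_cases hend : α.getD ρ 0 = c + 1
    · exact aux_last α hs T c r ρ hrρ hr hρ hend hlt
    · have hρ1 : IsCell α ρ (c+1) := ⟨hρ.1, by have := hρ.2; omega⟩
      have hrow := T.row_dec ρ c hρ1
      obtain ⟨hcell, hlt'⟩ := T.triple r ρ c hrρ hr hρ1 (by omega)
      exact ih (c+1) r ρ (by omega) hrρ hcell hρ1 hlt'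

/-- If `α` is a simple composition then in every SRCT of shape `α` the entries of each column
increase from top to bottom. -/
theorem simple_implies_col_increasing (n : ℕ) (α : List ℕ) (hpos : ∀ a ∈ α, 0 < a)
    (hsum : α.sum = n) (hs : SimpleComp α) (T : SRCT α) :
    ColIncreasing α T := by
  intro r r' c hrr' hr hr'
  rcases lt_trichotomy (T.entry r c) (T.entry r' c) with h | h | h
  · exact h
  · exact absurd (T.inj r c r' c hr hr' h).1 (by omega)
  · exact (aux_push α hs T (α.getD r' 0) c r r' (by omega) hrr' hr hr' h).elim
end

section
/- Let α ⊨ n be a complex composition. Then there exists τ ∈ SRCT(α) such that in at least one column of τ the entries do not increase from top to bottom. -/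
namespace CAux

def S (α : List ℕ) (r : ℕ) : ℕ := (α.take r).sum

lemma S_zero (α : List ℕ) : S α 0 = 0 := rfl

lemma S_succ (α : List ℕ) {r : ℕ} (h : r < α.length) :
    S α (r + 1) = S α r + α.getD r 0 := by
  unfold S
  rw [List.sum_take_succ _ _ h, List.getD_eq_getElem α 0 h]

lemma S_mono (α : List ℕ) {r r' : ℕ} (h : r ≤ r') : S α r ≤ S α r' := by
  unfold S
  have h1 : α.take r = (α.take r').take r := by rw [List.take_take, min_eq_left h]
  rw [h1, ← List.sum_take_add_sum_drop (α.take r') r]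
  omega

lemma S_len (α : List ℕ) : S α α.length = α.sum := by
  unfold S; rw [List.take_length]

lemma S_le_sum (α : List ℕ) (r : ℕ) : S α r ≤ α.sum := by
  rcases le_or_gt r α.length with h | h
  · rw [← S_len]; exact S_mono α h
  · unfold S; rw [List.take_of_length_le h.le]

/-- The modified row-block filling: the witness value `S α i + 1` is placed in
cell `(j, α_j - 1)`, rows `i..j-1` are shifted by one. -/
def E (α : List ℕ) (i j : ℕ) (r c : ℕ) : ℕ :=
  if IsCell α r c then
    if r = j ∧ c + 1 = α.getD j 0 then S α i + 1
    else S α r + α.getD r 0 + (if i ≤ r ∧ r < j then 1 else 0) - c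
  else 0

lemma exists_row (α : List ℕ) : ∀ b v, 0 < v → v ≤ S α b →
    ∃ r, r < b ∧ S α r < v ∧ v ≤ S α (r + 1) := by
  intro b
  induction b with
  | zero => intro v hv h; rw [S_zero] at h; omega
  | succ b ih =>
    intro v hv h
    by_cases hb : v ≤ S α b
    · obtain ⟨r, h1, h2, h3⟩ := ih v hv hb; exact ⟨r, by omega, h2, h3⟩
    · exact ⟨b, by omega, by omega, h⟩

section Main

variable {α : List ℕ} {i j : ℕ}

lemma E_nonspecial {r c : ℕ} (hcell : IsCell α r c) (hns : ¬(r = j ∧ c + 1 = α.getD j 0)) :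
    E α i j r c = S α r + α.getD r 0 + (if i ≤ r ∧ r < j then 1 else 0) - c := by
  rw [E, if_pos hcell, if_neg hns]

lemma E_special {c : ℕ} (hcell : IsCell α j c) (hc : c + 1 = α.getD j 0) :
    E α i j j c = S α i + 1 := by
  rw [E, if_pos hcell, if_pos ⟨rfl, hc⟩]

/-- bounds for a nonspecial cell -/
lemma E_bounds (hij : i < j) {r c : ℕ} (hcell : IsCell α r c)
    (hns : ¬(r = j ∧ c + 1 = α.getD j 0)) :
    S α r + (if i ≤ r ∧ r ≤ j then 1 else 0) < E α i j r c ∧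
      E α i j r c ≤ S α (r + 1) + (if i ≤ r ∧ r < j then 1 else 0) := by
  have hE := E_nonspecial (i := i) hcell hns
  have hS := S_succ α hcell.1
  have hc := hcell.2
  by_cases hrj : r = j
  · subst hrj
    have : ¬ (c + 1 = α.getD r 0) := fun h => hns ⟨rfl, h⟩
    split_ifs at hE ⊢ <;> omega
  · split_ifs at hE ⊢ <;> omega

/-- entries in nonspecial cells are strictly increasing in the row index -/
lemma E_cross (hij : i < j) (hjl : j < α.length) (h2 : 2 ≤ α.getD j 0)
    {r c r' c' : ℕ} (h : r < r') (hcell : IsCell α r c) (hcell' : IsCell α r' c')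
    (hns : ¬(r = j ∧ c + 1 = α.getD j 0)) (hns' : ¬(r' = j ∧ c' + 1 = α.getD j 0)) :
    E α i j r c < E α i j r' c' := by
  have hA := E_bounds (i := i) hij hcell hns
  have hA' := E_bounds (i := i) hij hcell' hns'
  have f1 : S α (r + 1) ≤ S α r' := S_mono α h
  have f2 : S α (j + 1) = S α j + α.getD j 0 := S_succ α hjl
  by_cases hrj : r + 1 ≤ j
  · have f3 : S α (r + 1) ≤ S α j := S_mono α hrj
    by_cases hjr' : j + 1 ≤ r'
    · have f4 : S α (j + 1) ≤ S α r' := S_mono α hjr'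
      split_ifs at hA hA' <;> omega
    · split_ifs at hA hA' <;> omega
  · have hjr' : j + 1 ≤ r' := by omega
    have f4 : S α (j + 1) ≤ S α r' := S_mono α hjr'
    split_ifs at hA hA' <;> omega

/-- a nonspecial entry in a row `< i` is at most `S α i` -/
lemma E_lt_special (hij : i < j) {r c : ℕ} (hcell : IsCell α r c) (hri : r < i) :
    E α i j r c ≤ S α i := by
  have hns : ¬(r = j ∧ c + 1 = α.getD j 0) := fun h => by omega
  have hA := E_bounds (i := i) hij hcell hns
  have f1 : S α (r + 1) ≤ S α i := S_mono α hri
  split_ifs at hA <;> omega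

/-- a nonspecial entry in a row `≥ i` is greater than the special value -/
lemma special_lt_E (hij : i < j) (hjl : j < α.length) (h2 : 2 ≤ α.getD j 0)
    {r c : ℕ} (hcell : IsCell α r c) (hri : i ≤ r)
    (hns : ¬(r = j ∧ c + 1 = α.getD j 0)) :
    S α i + 1 < E α i j r c := by
  have hA := E_bounds (i := i) hij hcell hns
  have f2 : S α (j + 1) = S α j + α.getD j 0 := S_succ α hjl
  have f5 : S α i ≤ S α r := S_mono α hri
  by_cases hrj : r ≤ j
  · split_ifs at hA <;> omega
  · have f6 : S α (j + 1) ≤ S α r := S_mono α (by omega)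
    have f7 : S α i ≤ S α j := S_mono α hij.le
    split_ifs at hA <;> omega

end Main

end CAux


/-- If `α` is a complex composition then some SRCT of shape `α` has a column whose entries do
not increase from top to bottom. -/
theorem complex_has_non_col_increasing (n : ℕ) (α : List ℕ) (hpos : ∀ a ∈ α, 0 < a)
    (hsum : α.sum = n) (hc : ¬ SimpleComp α) :
    ∃ T : SRCT α, ¬ ColIncreasing α T := by
  unfold SimpleComp at hc
  push_neg at hc
  obtain ⟨i, j, hij, hjl, h2, hle, hk⟩ := hc
  have hil : i < α.length := lt_trans hij hjl
  have f2 : CAux.S α (j + 1) = CAux.S α j + α.getD j 0 := CAux.S_succ α hjl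
  have hiSj : CAux.S α i ≤ CAux.S α j := CAux.S_mono α hij.le
  refine ⟨⟨CAux.E α i j, ?_, ?_, ?_, ?_, ?_, ?_, ?_, ?_⟩, ?_⟩
  · -- zero_off
    intro r c h
    rw [CAux.E, if_neg h]
  · -- one_le
    intro r c h
    by_cases hs : r = j ∧ c + 1 = α.getD j 0
    · obtain ⟨rfl, hc2⟩ := hs
      rw [CAux.E_special h hc2]
      omega
    · have := CAux.E_bounds hij h hs
      omega
  · -- le_sum
    intro r c h
    by_cases hs : r = j ∧ c + 1 = α.getD j 0
    · obtain ⟨rfl, hc2⟩ := hs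
      rw [CAux.E_special h hc2]
      have h5 : CAux.S α (i + 1) = CAux.S α i + α.getD i 0 := CAux.S_succ α hil
      have h6 : CAux.S α (i + 1) ≤ α.sum := CAux.S_le_sum α (i + 1)
      omega
    · have hA := CAux.E_bounds hij h hs
      have hb : CAux.S α (r + 1) ≤ α.sum := CAux.S_le_sum α (r + 1)
      by_cases hrj : r + 1 ≤ j
      · have f3 : CAux.S α (r + 1) ≤ CAux.S α j := CAux.S_mono α hrj
        have f4 : CAux.S α (j + 1) ≤ α.sum := CAux.S_le_sum α (j + 1)
        split_ifs at hA <;> omega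
      · split_ifs at hA <;> omega
  · -- inj
    intro r c r' c' h h' he
    by_cases hs : r = j ∧ c + 1 = α.getD j 0 <;>
      by_cases hs' : r' = j ∧ c' + 1 = α.getD j 0
    · exact ⟨by omega, by omega⟩
    · obtain ⟨rfl, hc2⟩ := hs
      rw [CAux.E_special h hc2] at he
      rcases lt_or_ge r' i with hri | hri
      · have := CAux.E_lt_special hij h' hri
        omega
      · have := CAux.special_lt_E hij hjl h2 h' hri hs'
        omega
    · obtain ⟨rfl, hc2⟩ := hs'
      rw [CAux.E_special h' hc2] at he
      rcases lt_or_ge r i with hri | hri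
      · have := CAux.E_lt_special hij h hri
        omega
      · have := CAux.special_lt_E hij hjl h2 h hri hs
        omega
    · rcases lt_trichotomy r r' with hlt | rfl | hlt
      · have := CAux.E_cross hij hjl h2 hlt h h' hs hs'
        omega
      · refine ⟨rfl, ?_⟩
        rw [CAux.E_nonspecial h hs, CAux.E_nonspecial h' hs'] at he
        have h5 := h.2
        have h6 := h'.2
        split_ifs at he <;> omega
      · have := CAux.E_cross hij hjl h2 hlt h' h hs' hs
        omega
  · -- surj
    intro v hv1 hv2
    have hvS : v ≤ CAux.S α α.length := by rw [CAux.S_len]; omega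
    rcases lt_trichotomy v (CAux.S α i + 1) with h1 | h1 | h1
    · obtain ⟨r, hr1, hr2, hr3⟩ := CAux.exists_row α i v (by omega) (by omega)
      have hrl : r < α.length := by omega
      have hS := CAux.S_succ α hrl
      refine ⟨r, CAux.S α r + α.getD r 0 - v, ⟨hrl, by omega⟩, ?_⟩
      rw [CAux.E_nonspecial ⟨hrl, by omega⟩ (by omega),
        if_neg (by omega : ¬(i ≤ r ∧ r < j))]
      omega
    · refine ⟨j, α.getD j 0 - 1, ⟨hjl, by omega⟩, ?_⟩
      rw [CAux.E_special ⟨hjl, by omega⟩ (by omega)]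
      omega
    · rcases le_or_gt v (CAux.S α j + 1) with h3 | h3
      · obtain ⟨r, hr1, hr2, hr3⟩ := CAux.exists_row α j (v - 1) (by omega) (by omega)
        have hrl : r < α.length := by omega
        have hS := CAux.S_succ α hrl
        have hir : i ≤ r := by
          by_contra hh
          have : CAux.S α (r + 1) ≤ CAux.S α i := CAux.S_mono α (by omega)
          omega
        refine ⟨r, CAux.S α r + α.getD r 0 + 1 - v, ⟨hrl, by omega⟩, ?_⟩
        rw [CAux.E_nonspecial ⟨hrl, by omega⟩ (by omega), if_pos ⟨hir, hr1⟩]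
        omega
      · rcases le_or_gt v (CAux.S α (j + 1)) with h4 | h4
        · refine ⟨j, CAux.S α j + α.getD j 0 - v, ⟨hjl, by omega⟩, ?_⟩
          rw [CAux.E_nonspecial ⟨hjl, by omega⟩ (by omega),
            if_neg (by omega : ¬(i ≤ j ∧ j < j))]
          omega
        · obtain ⟨r, hr1, hr2, hr3⟩ := CAux.exists_row α α.length v (by omega) hvS
          have hS := CAux.S_succ α hr1
          have hjr : j < r := by
            by_contra hh
            have : CAux.S α (r + 1) ≤ CAux.S α (j + 1) := CAux.S_mono α (by omega)
            omega
          refine ⟨r, CAux.S α r + α.getD r 0 - v, ⟨hr1, by omega⟩, ?_⟩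
          rw [CAux.E_nonspecial ⟨hr1, by omega⟩ (by omega),
            if_neg (by omega : ¬(i ≤ r ∧ r < j))]
          omega
  · -- row_dec
    intro r c h
    have hcell : IsCell α r c := ⟨h.1, by have := h.2; omega⟩
    by_cases hs : r = j ∧ c + 1 + 1 = α.getD j 0
    · obtain ⟨rfl, hc2⟩ := hs
      rw [CAux.E_special h hc2, CAux.E_nonspecial hcell (by omega),
        if_neg (by omega : ¬(i ≤ r ∧ r < r))]
      have h5 := h.2
      have h6 : CAux.S α i ≤ CAux.S α r := hiSj
      omega
    · have hns : ¬(r = j ∧ c + 1 = α.getD j 0) := by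
        rintro ⟨rfl, hc1⟩
        have := h.2
        omega
      rw [CAux.E_nonspecial h hs, CAux.E_nonspecial hcell hns]
      have h5 := h.2
      split_ifs <;> omega
  · -- col1_inc
    intro r r' h h1 h1'
    exact CAux.E_cross hij hjl h2 h h1 h1'
      (by rintro ⟨rfl, hcc⟩; omega) (by rintro ⟨rfl, hcc⟩; omega)
  · -- triple
    intro r r' c h hc1 hc2 hlt
    by_cases hs' : r' = j ∧ c + 1 + 1 = α.getD j 0
    · obtain ⟨rfl, hc2'⟩ := hs'
      rw [CAux.E_special hc2 hc2'] at hlt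
      have hri : i ≤ r := by
        by_contra hh
        have := CAux.E_lt_special hij hc1 (by omega)
        omega
      have har : α.getD r' 0 ≤ α.getD r 0 := by
        rcases eq_or_lt_of_le hri with rfl | hlt2
        · exact hle
        · have hk' := hk r hlt2 h
          have h5 := hc1.2
          omega
      have hcr : IsCell α r (c + 1) := ⟨hc1.1, by omega⟩
      refine ⟨hcr, ?_⟩
      rw [CAux.E_special hc2 hc2', CAux.E_nonspecial hcr (by omega), if_pos ⟨hri, h⟩]
      have h6 : CAux.S α i ≤ CAux.S α r := CAux.S_mono α hri
      omega
    · exfalso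
      by_cases hs : r = j ∧ c + 1 = α.getD j 0
      · obtain ⟨rfl, hcc⟩ := hs
        rw [CAux.E_special hc1 hcc] at hlt
        have := CAux.special_lt_E hij hjl h2 hc2 (by omega) hs'
        omega
      · have := CAux.E_cross hij hjl h2 h hc1 hc2 hs hs'
        omega
  · -- not column increasing
    intro hCI
    have hci : IsCell α i (α.getD j 0 - 1) := ⟨hil, by omega⟩
    have hcj : IsCell α j (α.getD j 0 - 1) := ⟨hjl, by omega⟩
    have h5 : CAux.E α i j i (α.getD j 0 - 1) < CAux.E α i j j (α.getD j 0 - 1) :=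
      hCI i j (α.getD j 0 - 1) hij hci hcj
    rw [CAux.E_special hcj (by omega)] at h5
    have := CAux.special_lt_E hij hjl h2 hci le_rfl (by omega)
    omega
end
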